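/- arXiv:2106.08257 — 7 statements merged into one kernel-verified Lean document; each statement's English description precedes it below -/
import Mathlib

section
/- A biword ((s_1,...,s_k),(c_1,...,c_k)) with positive integer entries is the profile of some nondecreasing word (i.e., arises from the unique maximal factorization of a nondecreasing word into shifted parking functions, recording the first letter and length of each factor) if and only if s_{i+1} > s_i + c_i for all i in [1,k-1]. -/
/-- `w` is a parking function: all letters are positive and the nondecreasing
rearrangement `a₁ ≤ a₂ ≤ …` satisfies `aᵢ ≤ i` (1-indexed). -/
def IsParking (w : List ℕ) : Prop :=
  (∀ a ∈ w, 1 ≤ a) ∧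
    ∃ s : List ℕ, s.Perm w ∧ s.Pairwise (· ≤ ·) ∧
      ∀ i (h : i < s.length), s.get ⟨i, h⟩ ≤ i + 1

/-- `w` is a shifted parking function: a nondecreasing parking function with a
constant added to every letter. -/
def IsShiftedParking (w : List ℕ) : Prop :=
  ∃ b : ℕ, ∃ p : List ℕ, IsParking p ∧ p.Pairwise (· ≤ ·) ∧ w = p.map (· + b)

/-- `ws` is the maximal (greedy, from the left) factorization of the word `w`
into shifted parking functions: the factors concatenate to `w`, each factor is a
nonempty shifted parking function, and no factor can be extended by the first
letter of the next factor (which, for nondecreasing words, is equivalent to the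
greedy choice of maximal-length factors). -/
def IsGreedyFact (ws : List (List ℕ)) (w : List ℕ) : Prop :=
  ws.flatten = w ∧ (∀ f ∈ ws, f ≠ [] ∧ IsShiftedParking f) ∧
    ∀ i (h : i + 1 < ws.length),
      ¬ IsShiftedParking
        (ws.get ⟨i, by omega⟩ ++ [(ws.get ⟨i + 1, h⟩).headI])

/-- The biword `p` (a list of pairs (first letter, length)) is the profile of
the word `w`. -/
def IsProfileOf (p : List (ℕ × ℕ)) (w : List ℕ) : Prop :=
  ∃ ws : List (List ℕ), IsGreedyFact ws w ∧
    p = ws.map (fun f => (f.headI, f.length))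

/-- Lemma A: in a shifted parking function, the `i`-th letter is at most head + i. -/
lemma shifted_get_le {f : List ℕ} (hf : IsShiftedParking f) :
    ∀ i (h : i < f.length), f.get ⟨i, h⟩ ≤ f.headI + i := by
  obtain ⟨b, q, ⟨hqpos, s, hperm, hssort, hsget⟩, hqsort, rfl⟩ := hf
  have hsq : s = q := List.Perm.eq_of_pairwise' hssort hqsort hperm
  subst hsq
  intro i h
  simp only [List.length_map] at h
  obtain ⟨a, t, rfl⟩ : ∃ a t, s = a :: t := by
    cases s with
    | nil => simp at h
    | cons a t => exact ⟨a, t, rfl⟩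
  have h1 : 1 ≤ a := hqpos a (by simp)
  have h2 := hsget i h
  have hh : (List.map (· + b) (a :: t)).headI = a + b := by simp
  rw [List.get_eq_getElem, List.getElem_map, hh]
  rw [List.get_eq_getElem] at h2
  omega

/-- Lemma B: a nonempty sorted list with positive head whose `i`-th letter is at
most head + i is a shifted parking function. -/
lemma shifted_of_le {f : List ℕ} (hne : f ≠ []) (hs : f.Pairwise (· ≤ ·))
    (h1 : 1 ≤ f.headI) (hb : ∀ i (h : i < f.length), f.get ⟨i, h⟩ ≤ f.headI + i) :
    IsShiftedParking f := by
  obtain ⟨a, t, rfl⟩ : ∃ a t, f = a :: t := by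
    cases f with
    | nil => simp at hne
    | cons a t => exact ⟨a, t, rfl⟩
  simp only [List.headI] at h1 hb
  have hmin : ∀ x ∈ a :: t, a ≤ x := by
    intro x hx
    rw [List.mem_cons] at hx
    rcases hx with rfl | hx
    · exact le_refl x
    · exact List.rel_of_pairwise_cons hs hx
  refine ⟨a - 1, (a :: t).map (· - (a - 1)), ⟨?_, (a :: t).map (· - (a - 1)), .refl _, ?_, ?_⟩, ?_, ?_⟩
  · intro x hx
    simp only [List.mem_map] at hx
    obtain ⟨y, hy, rfl⟩ := hx
    have := hmin y hy
    omega
  · rw [List.pairwise_map]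
    exact hs.imp (fun hxy => by omega)
  · intro i hi
    simp only [List.length_map] at hi
    have := hb i hi
    rw [List.get_eq_getElem, List.getElem_map]
    rw [List.get_eq_getElem] at this
    omega
  · rw [List.pairwise_map]
    exact hs.imp (fun hxy => by omega)
  · rw [List.map_map]
    symm
    have hcongr : List.map ((· + (a - 1)) ∘ (· - (a - 1))) (a :: t)
        = List.map id (a :: t) := by
      refine List.map_congr_left ?_
      intro x hx
      have hax := hmin x hx
      simp only [Function.comp_apply, id]
      omega
    rw [hcongr, List.map_id]

lemma pair_sublist_join (ws : List (List ℕ)) (i : ℕ) (h : i + 1 < ws.length) :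
    (ws[i]'(by omega) ++ ws[i + 1]).Sublist ws.flatten := by
  have hdec : ws.drop i = ws[i]'(by omega) :: ws[i+1] :: ws.drop (i + 2) := by
    rw [List.drop_eq_getElem_cons (by omega : i < ws.length),
      List.drop_eq_getElem_cons h]
  have h1 : (ws[i]'(by omega) ++ ws[i+1]).Sublist (ws.drop i).flatten := by
    rw [hdec]
    simp only [List.flatten_cons, ← List.append_assoc]
    exact List.sublist_append_left _ _
  refine h1.trans ?_
  conv_rhs => rw [← List.take_append_drop i ws]
  rw [List.flatten_append]
  exact List.sublist_append_right _ _

lemma headI_append {l r : List ℕ} (h : l ≠ []) : (l ++ r).headI = l.headI := by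
  cases l with
  | nil => simp at h
  | cons a t => rfl


lemma headI_mem' {l : List ℕ} (h : l ≠ []) : l.headI ∈ l := by
  cases l with
  | nil => simp at h
  | cons a t => simp

/-- a biword `((s₁,…,s_k),(c₁,…,c_k))` with positive entries is the
profile of some nondecreasing word iff `s_{i+1} > s_i + c_i` for all
`i ∈ [1,k-1]`. -/
theorem statement0 (p : List (ℕ × ℕ)) (hpos : ∀ q ∈ p, 0 < q.1 ∧ 0 < q.2) :
    (∃ w : List ℕ, w.Pairwise (· ≤ ·) ∧ IsProfileOf p w) ↔
      ∀ i (h : i + 1 < p.length),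
        (p.get ⟨i, by omega⟩).1 + (p.get ⟨i, by omega⟩).2 <
          (p.get ⟨i + 1, h⟩).1 := by
  constructor
  · rintro ⟨w, hw, ws, ⟨rfl, hfac, hgreedy⟩, rfl⟩ i h
    simp only [List.length_map] at h
    simp only [List.get_eq_getElem, List.getElem_map]
    have hwf : List.Pairwise (· ≤ ·) ws.flatten := hw
    have hfmem : ws[i] ∈ ws := List.getElem_mem _
    have hgmem : ws[i + 1] ∈ ws := List.getElem_mem _
    obtain ⟨hfne, hfpark⟩ := hfac _ hfmem
    obtain ⟨hgne, -⟩ := hfac _ hgmem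
    by_contra hcon
    push_neg at hcon
    refine hgreedy i (by simpa using h) ?_
    simp only [List.get_eq_getElem]
    have hsub : (ws[i] ++ [(ws[i + 1]).headI]).Sublist ws.flatten := by
      refine List.Sublist.trans ?_ (pair_sublist_join ws i (by omega))
      rw [List.append_sublist_append_left]
      exact List.singleton_sublist.mpr (headI_mem' hgne)
    have hsorted : (ws[i] ++ [(ws[i + 1]).headI]).Pairwise (· ≤ ·) := hwf.sublist hsub
    have hhead : (ws[i] ++ [(ws[i + 1]).headI]).headI = (ws[i]).headI := headI_append hfne
    have h1 : 1 ≤ (ws[i]).headI := by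
      have := (hpos ((ws[i]).headI, (ws[i]).length) ?_).1
      · simp at this; omega
      · simp only [List.mem_map]
        exact ⟨ws[i], hfmem, rfl⟩
    refine shifted_of_le (by simp) hsorted (by rw [hhead]; exact h1) ?_
    intro j hj
    rw [List.get_eq_getElem, hhead]
    simp only [List.length_append, List.length_singleton] at hj
    rcases lt_or_ge j (ws[i]).length with hjf | hjf
    · rw [List.getElem_append_left hjf]
      have := shifted_get_le hfpark j hjf
      rw [List.get_eq_getElem] at this
      exact this
    · have hjeq : j = (ws[i]).length := by omega
      rw [List.getElem_concat_length hjeq]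
      omega
  · intro hcond
    set ws : List (List ℕ) := p.map (fun q => List.replicate q.2 q.1) with hws
    have hlen : ws.length = p.length := by simp [hws]
    have hget : ∀ i (h : i < p.length), ws[i]'(by omega) = List.replicate (p[i].2) (p[i].1) := by
      intro i h; simp [hws]
    have hne : ∀ i (h : i < p.length), ws[i]'(by omega) ≠ [] := by
      intro i h
      rw [hget i h]
      have := (hpos p[i] (List.getElem_mem _)).2
      simp only [ne_eq, List.replicate_eq_nil_iff]
      omega
    have hheadI : ∀ i (h : i < p.length), (ws[i]'(by omega)).headI = p[i].1 := by
      intro i h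
      rw [hget i h]
      have := (hpos p[i] (List.getElem_mem _)).2
      cases hc : p[i].2 with
      | zero => omega
      | succ n => simp [List.replicate_succ]
    have hlenI : ∀ i (h : i < p.length), (ws[i]'(by omega)).length = p[i].2 := by
      intro i h; rw [hget i h]; simp
    have hmono : ∀ j (hj : j < p.length) i (hij : i < j),
        (p[i]'(by omega)).1 + (p[i]'(by omega)).2 ≤ p[j].1 := by
      intro j
      induction j with
      | zero => omega
      | succ n ih =>
        intro hj i hij
        rcases lt_or_ge i n with hin | hin
        · have h1 := ih (by omega) i hin
          have h2 := hcond n (by omega)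
          simp only [List.get_eq_getElem] at h2
          omega
        · have : i = n := by omega
          subst this
          have h2 := hcond i (by omega)
          simp only [List.get_eq_getElem] at h2
          omega
    refine ⟨ws.flatten, ?_, ws, ⟨rfl, ?_, ?_⟩, ?_⟩
    · rw [List.pairwise_flatten]
      constructor
      · intro l hl
        simp only [hws, List.mem_map] at hl
        obtain ⟨q, _, rfl⟩ := hl
        rw [List.pairwise_replicate]
        right; exact le_refl _
      · rw [hws, List.pairwise_map, List.pairwise_iff_getElem]
        intro i j hi hj hij x hx y hy
        rw [List.eq_of_mem_replicate hx, List.eq_of_mem_replicate hy]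
        have := hmono j hj i hij
        have := (hpos p[i] (List.getElem_mem _)).2
        omega
    · intro f hf
      obtain ⟨i, hi, rfl⟩ := List.getElem_of_mem hf
      rw [hlen] at hi
      refine ⟨hne i hi, ?_⟩
      refine shifted_of_le (hne i hi) ?_ ?_ ?_
      · rw [hget i hi]
        simp only [List.pairwise_replicate]
        right; exact le_refl _
      · rw [hheadI i hi]
        exact (hpos p[i] (List.getElem_mem _)).1
      · intro j hj
        rw [List.get_eq_getElem, hheadI i hi]
        simp only [hget i hi, List.getElem_replicate]
        omega
    · intro i h
      rw [hlen] at h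
      intro hcontra
      have hkey := shifted_get_le hcontra ((ws.get ⟨i, by omega⟩).length)
        (by simp)
      rw [List.get_eq_getElem] at hkey
      simp only [List.get_eq_getElem] at hkey
      rw [List.getElem_concat_length rfl] at hkey
      rw [headI_append (hne i (by omega))] at hkey
      rw [hheadI (i+1) h, hheadI i (by omega), hlenI i (by omega)] at hkey
      have := hcond i (by simpa using h)
      simp only [List.get_eq_getElem] at this
      omega
    · rw [hws, List.map_map]
      symm
      calc List.map ((fun f => (f.headI, f.length)) ∘ fun q => List.replicate q.2 q.1) p
          = List.map id p := List.map_congr_left (fun q hq => by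
            have hq2 := (hpos q hq).2
            simp only [Function.comp_apply, List.length_replicate, id]
            cases hc : q.2 with
            | zero => omega
            | succ n =>
              rw [List.replicate_succ]
              simp only [List.headI]
              rw [← hc])
        _ = p := List.map_id _
end

section
/- Let u and v be nondecreasing words with profiles ((s_1,...,s_k),(c_1,...,c_k)) and ((t_1,...,t_l),(d_1,...,d_l)). Merge the two biwords into a joint biword ((x_1,...,x_{k+l}),(y_1,...,y_{k+l})) by sorting so the top line is weakly increasing (breaking ties by putting s-biletters first). Then the concatenation uv is a parking function if and only if x_m ≤ y_1 + ... + y_{m-1} + 1 for all m in [1, k+l]. -/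
/-- The joint biword: merge the two profiles, sorting (stably) by the top line;
since `List.mergeSort` is stable and the `s`-biletters are listed first, ties
put the `s`-biletters before the `t`-biletters. -/
def jointProfile (pu pv : List (ℕ × ℕ)) : List (ℕ × ℕ) :=
  (pu ++ pv).mergeSort (fun a b => decide (a.1 ≤ b.1))

namespace PFAux

def F (b : ℕ) (p : ℕ × ℕ) : ℕ := min p.2 (b + 1 - p.1)
def G (b : ℕ) (p : ℕ × ℕ) : ℕ := if p.1 ≤ b then p.2 else 0

lemma pairwise_fst_mono {L : List (ℕ × ℕ)} (hsort : L.Pairwise fun a b => a.1 ≤ b.1)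
    {i j : ℕ} (hij : i ≤ j) (hj : j < L.length) : L[i].1 ≤ L[j].1 := by
  rcases eq_or_lt_of_le hij with rfl | hlt
  · exact le_refl _
  · have := List.pairwise_iff_get.mp hsort ⟨i, by omega⟩ ⟨j, hj⟩ hlt
    simpa using this

lemma sum_split (L : List (ℕ × ℕ)) (g : ℕ × ℕ → ℕ) {m : ℕ} (h : m < L.length) :
    (L.map g).sum = ((L.take m).map g).sum + g L[m] + ((L.drop (m + 1)).map g).sum := by
  have hL : L = L.take m ++ L[m] :: L.drop (m + 1) := by
    rw [← List.drop_eq_getElem_cons h, List.take_append_drop]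
  calc (L.map g).sum = ((L.take m ++ L[m] :: L.drop (m + 1)).map g).sum := by rw [← hL]
    _ = _ := by rw [List.map_append, List.map_cons, List.sum_append, List.sum_cons]; omega

lemma shifted_facts {f : List ℕ} (hne : f ≠ []) (h : IsShiftedParking f) :
    (∀ a ∈ f, 1 ≤ a) ∧ (∀ a ∈ f, f.headI ≤ a) ∧
      ∀ i (hi : i < f.length), f[i] ≤ f.headI + i := by
  obtain ⟨b, p, ⟨hpos, s, hsp, hss, hsg⟩, hps, rfl⟩ := h
  have hsplen : s = p := List.Perm.eq_of_pairwise' hss hps hsp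
  subst hsplen
  cases s with
  | nil => simp at hne
  | cons a t =>
    have hget : ∀ i (hi : i < (a :: t).length), (a :: t)[i] ≤ i + 1 := by
      intro i hi; simpa using hsg i hi
    have hhead : ((a :: t).map (· + b)).headI = a + b := by simp
    refine ⟨?_, ?_, ?_⟩
    · intro x hx
      obtain ⟨y, hy, rfl⟩ := List.mem_map.mp hx
      have := hpos y hy; omega
    · intro x hx
      obtain ⟨y, hy, rfl⟩ := List.mem_map.mp hx
      have hay : a ≤ y := by
        rcases List.mem_cons.mp hy with rfl | hy
        · exact le_refl _
        · exact (List.pairwise_cons.mp hss).1 y hy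
      simp; omega
    · intro i hi
      have hi' : i < (a :: t).length := by simpa using hi
      have h1 : ((a :: t).map (· + b))[i] = (a :: t)[i] + b :=
        List.getElem_map _
      have h2 := hget i hi'
      have ha1 : a ≤ 1 := by exact hget 0 (by simp)
      have ha2 : 1 ≤ a := hpos a (by simp)
      rw [h1, hhead]; omega

lemma countP_le_G {f : List ℕ} (hh : ∀ a ∈ f, f.headI ≤ a) (b : ℕ) :
    f.countP (fun a => decide (a ≤ b)) ≤ G b (f.headI, f.length) := by
  unfold G
  split
  · exact le_trans List.countP_le_length (le_refl _)
  · rename_i hb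
    have : f.countP (fun a => decide (a ≤ b)) = 0 := by
      rw [List.countP_eq_zero]
      intro a ha
      have := hh a ha
      simp; omega
    omega

lemma F_le_countP {f : List ℕ}
    (hg : ∀ i (hi : i < f.length), f[i] ≤ f.headI + i) (b : ℕ) :
    F b (f.headI, f.length) ≤ f.countP (fun a => decide (a ≤ b)) := by
  set k := min f.length (b + 1 - f.headI) with hk
  have hkl : k ≤ f.length := min_le_left _ _
  have h1 : (f.take k).countP (fun a => decide (a ≤ b)) = (f.take k).length := by
    rw [List.countP_eq_length]
    intro a ha
    obtain ⟨i, hi, rfl⟩ := List.mem_iff_getElem.mp ha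
    have hik : i < k := by rw [List.length_take] at hi; omega
    rw [List.getElem_take]
    have := hg i (by omega)
    simp; omega
  have h2 : (f.take k).length = k := by simp [List.length_take]; omega
  have h3 : f.countP (fun a => decide (a ≤ b)) =
      (f.take k).countP (fun a => decide (a ≤ b)) +
      (f.drop k).countP (fun a => decide (a ≤ b)) := by
    conv_lhs => rw [← List.take_append_drop k f]
    rw [List.countP_append]
  have : F b (f.headI, f.length) = k := rfl
  omega

end PFAux

namespace PFAux

lemma sorted_getElem_mono {s : List ℕ} (hss : s.Pairwise (· ≤ ·))
    {i j : ℕ} (hij : i ≤ j) (hj : j < s.length) : s[i] ≤ s[j] := by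
  rcases eq_or_lt_of_le hij with rfl | hlt
  · exact le_refl _
  · have := List.pairwise_iff_get.mp hss ⟨i, by omega⟩ ⟨j, hj⟩ hlt
    simpa using this

lemma isParking_iff_count (w : List ℕ) (hpos : ∀ a ∈ w, 1 ≤ a) :
    IsParking w ↔
      ∀ b, 1 ≤ b → b ≤ w.length → b ≤ w.countP (fun a => decide (a ≤ b)) := by
  constructor
  · rintro ⟨-, s, hsp, hss, hsg⟩ b hb1 hbn
    have hlen : s.length = w.length := hsp.length_eq
    have hcnt : w.countP (fun a => decide (a ≤ b)) = s.countP (fun a => decide (a ≤ b)) :=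
      (hsp.countP_eq _).symm
    have hbl : b ≤ s.length := by omega
    have h1 : (s.take b).countP (fun a => decide (a ≤ b)) = (s.take b).length := by
      rw [List.countP_eq_length]
      intro a ha
      obtain ⟨i, hi, rfl⟩ := List.mem_iff_getElem.mp ha
      have hib : i < b := by rw [List.length_take] at hi; omega
      rw [List.getElem_take]
      have := hsg i (by omega)
      simp only [List.get_eq_getElem] at this
      simp; omega
    have h2 : (s.take b).length = b := by rw [List.length_take]; omega
    have h3 : s.countP (fun a => decide (a ≤ b)) =
        (s.take b).countP (fun a => decide (a ≤ b)) +
        (s.drop b).countP (fun a => decide (a ≤ b)) := by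
      conv_lhs => rw [← List.take_append_drop b s]
      rw [List.countP_append]
    omega
  · intro hcount
    refine ⟨hpos, w.insertionSort (· ≤ ·), List.perm_insertionSort _ _,
      List.pairwise_insertionSort _ _, ?_⟩
    set s := w.insertionSort (· ≤ ·) with hs
    have hperm : s.Perm w := List.perm_insertionSort _ _
    have hss : s.Pairwise (· ≤ ·) := List.pairwise_insertionSort _ _
    have hlen : s.length = w.length := hperm.length_eq
    intro i hi
    simp only [List.get_eq_getElem]
    by_contra hlt
    push_neg at hlt
    have hc := hcount (i + 1) (by omega) (by omega)
    rw [← hperm.countP_eq] at hc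
    have h3 : s.countP (fun a => decide (a ≤ i + 1)) =
        (s.take i).countP (fun a => decide (a ≤ i + 1)) +
        (s.drop i).countP (fun a => decide (a ≤ i + 1)) := by
      conv_lhs => rw [← List.take_append_drop i s]
      rw [List.countP_append]
    have h4 : (s.drop i).countP (fun a => decide (a ≤ i + 1)) = 0 := by
      rw [List.countP_eq_zero]
      intro a ha
      obtain ⟨j, hj, rfl⟩ := List.mem_iff_getElem.mp ha
      rw [List.getElem_drop]
      have hj' : i + j < s.length := by rw [List.length_drop] at hj; omega
      have := sorted_getElem_mono hss (Nat.le_add_right i j) hj'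
      simp; omega
    have h5 : (s.take i).countP (fun a => decide (a ≤ i + 1)) ≤ i := by
      refine le_trans List.countP_le_length ?_
      rw [List.length_take]; omega
    omega

lemma drop_fst_ge {L : List (ℕ × ℕ)} (hsort : L.Pairwise fun a b => a.1 ≤ b.1)
    {m : ℕ} (h : m < L.length) : ∀ p ∈ L.drop m, L[m].1 ≤ p.1 := by
  intro p hp
  obtain ⟨j, hj, rfl⟩ := List.mem_iff_getElem.mp hp
  rw [List.getElem_drop]
  have hj' : m + j < L.length := by rw [List.length_drop] at hj; omega
  exact pairwise_fst_mono hsort (Nat.le_add_right m j) hj'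

lemma take_mem_index {L : List (ℕ × ℕ)} {m : ℕ} {p : ℕ × ℕ} (hp : p ∈ L.take m) :
    ∃ i, i < m ∧ ∃ hi : i < L.length, L[i] = p := by
  obtain ⟨i, hi, rfl⟩ := List.mem_iff_getElem.mp hp
  have h1 : i < m ∧ i < L.length := by rw [List.length_take] at hi; omega
  exact ⟨i, h1.1, h1.2, List.getElem_take.symm⟩

lemma core_forward (L : List (ℕ × ℕ)) (hsort : L.Pairwise fun a b => a.1 ≤ b.1)
    (hy : ∀ p ∈ L, 1 ≤ p.2) (N : ℕ → ℕ)
    (hNle : ∀ b, N b ≤ (L.map (G b)).sum)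
    (hpark : ∀ b, 1 ≤ b → b ≤ (L.map Prod.snd).sum → b ≤ N b) :
    ∀ m (h : m < L.length), L[m].1 ≤ ((L.take m).map Prod.snd).sum + 1 := by
  intro m h
  set x := L[m].1 with hxdef
  set Y := ((L.take m).map Prod.snd).sum with hYdef
  set n := (L.map Prod.snd).sum with hndef
  have hsplit : n = Y + L[m].2 + ((L.drop (m + 1)).map Prod.snd).sum :=
    sum_split L Prod.snd h
  have hy1 : 1 ≤ L[m].2 := hy _ (List.getElem_mem _)
  have htake : ∀ b, ((L.take m).map (G b)).sum ≤ Y := by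
    intro b
    apply List.sum_le_sum
    intro p hp
    unfold G; split <;> omega
  by_cases hx1 : x ≤ 1
  · omega
  push_neg at hx1
  by_cases hxb : x - 1 ≤ n
  · have h1 := hpark (x - 1) (by omega) hxb
    have h2 := hNle (x - 1)
    have hdrop : ((L.drop m).map (G (x - 1))).sum = 0 := by
      apply List.sum_eq_zero
      intro z hz
      obtain ⟨p, hp, rfl⟩ := List.mem_map.mp hz
      have := drop_fst_ge hsort h p hp
      unfold G; rw [if_neg]; omega
    have h3 : (L.map (G (x - 1))).sum =
        ((L.take m).map (G (x - 1))).sum + ((L.drop m).map (G (x - 1))).sum := by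
      conv_lhs => rw [← List.take_append_drop m L]
      rw [List.map_append, List.sum_append]
    have h4 := htake (x - 1)
    omega
  · exfalso
    push_neg at hxb
    have hn1 : 1 ≤ n := by omega
    have h1 := hpark n (by omega) (le_refl _)
    have h2 := hNle n
    have h3 : (L.map (G n)).sum =
        ((L.take m).map (G n)).sum + G n L[m] + ((L.drop (m + 1)).map (G n)).sum :=
      sum_split L (G n) h
    have h4 : G n L[m] = 0 := by unfold G; rw [if_neg]; omega
    have h5 : ((L.drop (m + 1)).map (G n)).sum ≤ ((L.drop (m + 1)).map Prod.snd).sum := by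
      apply List.sum_le_sum; intro p hp; unfold G; split <;> omega
    have h6 := htake n
    omega

end PFAux

namespace PFAux

lemma F_mono {b b' : ℕ} (hbb : b' ≤ b) (p : ℕ × ℕ) : F b' p ≤ F b p := by
  unfold F; omega

lemma core_backward (L : List (ℕ × ℕ)) (hsort : L.Pairwise fun a b => a.1 ≤ b.1)
    (hy : ∀ p ∈ L, 1 ≤ p.2)
    (hcond : ∀ m (h : m < L.length), L[m].1 ≤ ((L.take m).map Prod.snd).sum + 1) :
    ∀ b, 1 ≤ b → b ≤ (L.map Prod.snd).sum → b ≤ (L.map (F b)).sum := by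
  intro b
  induction b using Nat.strong_induction_on with
  | _ b IH =>
  intro hb1 hbn
  classical
  set P : ℕ → Prop := fun m => m < L.length ∧ (L.getD m (0,0)).1 ≤ b ∧
      b + 1 < (L.getD m (0,0)).1 + (L.getD m (0,0)).2 with hPdef
  by_cases hP : ∃ m, P m
  · -- there is a "partial" factor; take the greatest one
    obtain ⟨m, hm⟩ := hP
    set m0 := Nat.findGreatest P L.length with hm0def
    have hm0P : P m0 := Nat.findGreatest_spec (le_of_lt hm.1) hm
    obtain ⟨hm0len, hx0b, hpart⟩ := hm0P
    rw [List.getD_eq_getElem _ _ hm0len] at hx0b hpart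
    set x0 := L[m0].1 with hx0def
    set y0 := L[m0].2 with hy0def
    have hsplit : (L.map (F b)).sum =
        ((L.take m0).map (F b)).sum + F b L[m0] + ((L.drop (m0+1)).map (F b)).sum :=
      sum_split L (F b) hm0len
    have hFm0 : F b L[m0] = b + 1 - x0 := by
      show min y0 (b + 1 - x0) = b + 1 - x0
      omega
    -- lower bound the take part by x0 - 1
    have htake : x0 - 1 ≤ ((L.take m0).map (F b)).sum := by
      by_cases hx01 : x0 ≤ 1
      · omega
      · push_neg at hx01
        set b' := x0 - 1 with hb'def
        have hb'b : b' < b := by omega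
        have hIH := IH b' hb'b (by omega) (by omega)
        have hdrop0 : ((L.drop m0).map (F b')).sum = 0 := by
          apply List.sum_eq_zero
          intro z hz
          obtain ⟨p, hp, rfl⟩ := List.mem_map.mp hz
          have := drop_fst_ge hsort hm0len p hp
          show min p.2 (b' + 1 - p.1) = 0
          omega
        have hsplit' : (L.map (F b')).sum =
            ((L.take m0).map (F b')).sum + ((L.drop m0).map (F b')).sum := by
          conv_lhs => rw [← List.take_append_drop m0 L]
          rw [List.map_append, List.sum_append]
        have hmono : ((L.take m0).map (F b')).sum ≤ ((L.take m0).map (F b)).sum :=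
          List.sum_le_sum (fun p _ => F_mono (by omega) p)
        omega
    omega
  · -- no partial factor
    push_neg at hP
    by_cases hall : ∀ m (h : m < L.length), L[m].1 ≤ b
    · -- every factor is fully counted
      have hge : (L.map Prod.snd).sum ≤ (L.map (F b)).sum := by
        apply List.sum_le_sum
        intro p hp
        obtain ⟨i, hi, rfl⟩ := List.mem_iff_getElem.mp hp
        have hnp : ¬(L[i].1 ≤ b ∧ b + 1 < L[i].1 + L[i].2) := by
          have h0 := hP i
          rw [hPdef] at h0
          simp only [List.getD_eq_getElem _ _ hi] at h0
          exact fun hc => h0 ⟨hi, hc.1, hc.2⟩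
        push_neg at hnp
        have h1 := hall i hi
        have h2 := hnp h1
        show L[i].2 ≤ min L[i].2 (b + 1 - L[i].1)
        omega
      omega
    · -- take the least index with head > b
      push_neg at hall
      obtain ⟨m, hm, hmb⟩ := hall
      have hex : ∃ m, m < L.length ∧ b < (L.getD m (0,0)).1 := by
        exact ⟨m, hm, by rw [List.getD_eq_getElem _ _ hm]; exact hmb⟩
      have hspec := Nat.find_spec hex
      set m1 := Nat.find hex with hm1def
      obtain ⟨hm1len, hm1b⟩ := hspec
      rw [List.getD_eq_getElem _ _ hm1len] at hm1b
      have hmin : ∀ j, j < m1 → ¬(j < L.length ∧ b < (L.getD j (0,0)).1) :=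
        fun j hj => Nat.find_min hex hj
      have hjb : ∀ j (hjl : j < L.length), j < m1 → L[j].1 ≤ b := by
        intro j hjl hjm
        have := hmin j hjm
        push_neg at this
        have := this hjl
        rwa [List.getD_eq_getElem _ _ hjl] at this
      have hcond1 := hcond m1 hm1len
      have htake : ((L.take m1).map Prod.snd).sum ≤ ((L.take m1).map (F b)).sum := by
        apply List.sum_le_sum
        intro p hp
        obtain ⟨i, him, hil, rfl⟩ := take_mem_index hp
        have h1 := hjb i hil him
        have hnp : ¬(L[i].1 ≤ b ∧ b + 1 < L[i].1 + L[i].2) := by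
          have h0 := hP i
          rw [hPdef] at h0
          simp only [List.getD_eq_getElem _ _ hil] at h0
          exact fun hc => h0 ⟨hil, hc.1, hc.2⟩
        push_neg at hnp
        have h2 := hnp h1
        show L[i].2 ≤ min L[i].2 (b + 1 - L[i].1)
        omega
      have hsplit : (L.map (F b)).sum =
          ((L.take m1).map (F b)).sum + ((L.drop m1).map (F b)).sum := by
        conv_lhs => rw [← List.take_append_drop m1 L]
        rw [List.map_append, List.sum_append]
      omega

end PFAux

namespace PFAux

lemma profile_facts {w : List ℕ} {q : List (ℕ × ℕ)} (h : IsProfileOf q w) :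
    (∀ a ∈ w, 1 ≤ a) ∧ (∀ p ∈ q, 1 ≤ p.2) ∧
      ((q.map Prod.snd).sum = w.length) ∧
      (∀ b, (q.map (F b)).sum ≤ w.countP (fun a => decide (a ≤ b))) ∧
      (∀ b, w.countP (fun a => decide (a ≤ b)) ≤ (q.map (G b)).sum) := by
  obtain ⟨ws, ⟨hjoin, hfac, -⟩, rfl⟩ := h
  subst hjoin
  have hfacts : ∀ f ∈ ws, (∀ a ∈ f, 1 ≤ a) ∧ (∀ a ∈ f, f.headI ≤ a) ∧
      ∀ i (hi : i < f.length), f[i] ≤ f.headI + i := by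
    intro f hf
    exact shifted_facts (hfac f hf).1 (hfac f hf).2
  refine ⟨?_, ?_, ?_, ?_, ?_⟩
  · intro a ha
    obtain ⟨f, hf, haf⟩ := List.mem_flatten.mp ha
    exact ((hfacts f hf).1) a haf
  · intro p hp
    obtain ⟨f, hf, rfl⟩ := List.mem_map.mp hp
    have : f ≠ [] := (hfac f hf).1
    have : 0 < f.length := List.length_pos_iff.mpr this
    exact this
  · rw [List.map_map, List.length_flatten]
    rfl
  · intro b
    rw [List.map_map, List.countP_flatten]
    apply List.sum_le_sum
    intro f hf
    exact F_le_countP ((hfacts f hf).2.2) b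
  · intro b
    rw [List.map_map, List.countP_flatten]
    apply List.sum_le_sum
    intro f hf
    exact countP_le_G ((hfacts f hf).2.1) b

end PFAux

/-- `uv` is a parking function iff the joint profile
`((x₁,…),(y₁,…))` of the profiles of `u` and `v` satisfies
`x_m ≤ y₁ + ⋯ + y_{m-1} + 1` for all `m`. -/
theorem statement1 (u v : List ℕ) (pu pv : List (ℕ × ℕ))
    (hu : u.Pairwise (· ≤ ·)) (hv : v.Pairwise (· ≤ ·))
    (hpu : IsProfileOf pu u) (hpv : IsProfileOf pv v) :
    IsParking (u ++ v) ↔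
      ∀ m (h : m < (jointProfile pu pv).length),
        ((jointProfile pu pv).get ⟨m, h⟩).1 ≤
          (((jointProfile pu pv).take m).map Prod.snd).sum + 1 := by
  classical
  open PFAux in
  set L := jointProfile pu pv with hL
  have hperm : L.Perm (pu ++ pv) := List.mergeSort_perm _ _
  have hsortL : L.Pairwise (fun a b : ℕ × ℕ => a.1 ≤ b.1) := by
    have := List.pairwise_mergeSort (le := fun a b : ℕ × ℕ => decide (a.1 ≤ b.1))
      (fun a b c h1 h2 => by simp only [decide_eq_true_eq] at *; omega)
      (fun a b => by simp only [Bool.or_eq_true, decide_eq_true_eq]; omega)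
      (pu ++ pv)
    simpa [hL, jointProfile] using this
  obtain ⟨hposu, hyu, hsumu, hFu, hGu⟩ := PFAux.profile_facts hpu
  obtain ⟨hposv, hyv, hsumv, hFv, hGv⟩ := PFAux.profile_facts hpv
  have hpos : ∀ a ∈ u ++ v, 1 ≤ a := by
    intro a ha
    rcases List.mem_append.mp ha with h | h
    exacts [hposu a h, hposv a h]
  have hy : ∀ p ∈ L, 1 ≤ p.2 := by
    intro p hp
    rcases List.mem_append.mp (hperm.subset hp) with h | h
    exacts [hyu p h, hyv p h]
  set N : ℕ → ℕ := fun b => (u ++ v).countP (fun a => decide (a ≤ b)) with hN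
  have hlen : (L.map Prod.snd).sum = (u ++ v).length := by
    rw [(hperm.map Prod.snd).sum_eq, List.map_append, List.sum_append,
      List.length_append, hsumu, hsumv]
  have hNF : ∀ b, (L.map (PFAux.F b)).sum ≤ N b := by
    intro b
    calc (L.map (PFAux.F b)).sum = ((pu ++ pv).map (PFAux.F b)).sum :=
          (hperm.map (PFAux.F b)).sum_eq
      _ = (pu.map (PFAux.F b)).sum + (pv.map (PFAux.F b)).sum := by
          rw [List.map_append, List.sum_append]
      _ ≤ N b := by
          rw [hN]
          simp only [List.countP_append]
          exact Nat.add_le_add (hFu b) (hFv b)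
  have hNG : ∀ b, N b ≤ (L.map (PFAux.G b)).sum := by
    intro b
    calc N b = u.countP (fun a => decide (a ≤ b)) + v.countP (fun a => decide (a ≤ b)) := by
          rw [hN]; simp only [List.countP_append]
      _ ≤ (pu.map (PFAux.G b)).sum + (pv.map (PFAux.G b)).sum :=
          Nat.add_le_add (hGu b) (hGv b)
      _ = ((pu ++ pv).map (PFAux.G b)).sum := by rw [List.map_append, List.sum_append]
      _ = (L.map (PFAux.G b)).sum := ((hperm.map (PFAux.G b)).sum_eq).symm
  rw [PFAux.isParking_iff_count (u ++ v) hpos]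
  constructor
  · intro hcount m h
    have := PFAux.core_forward L hsortL hy N hNG
      (fun b hb1 hble => hcount b hb1 (by omega)) m h
    simpa [List.get_eq_getElem] using this
  · intro hc b hb1 hbl
    have hc' : ∀ m (h : m < L.length), L[m].1 ≤ ((L.take m).map Prod.snd).sum + 1 := by
      intro m h
      have := hc m h
      simpa [List.get_eq_getElem] using this
    have := PFAux.core_backward L hsortL hy hc' b hb1 (by omega)
    exact le_trans this (hNF b)
end

section
/- Whether the concatenation uv of two nondecreasing words u, v is a parking function depends only on the biprofile (pf(u), pf(v)): if uv is a parking function and (u', v') is any pair of nondecreasing words with pf(u')=pf(u) and pf(v')=pf(v), then u'v' is also a parking function. -/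
/-- count of letters `≤ k` in a word -/
def cnt (k : ℕ) (w : List ℕ) : ℕ := w.countP (fun x => x ≤ k)

/-- the minimal count function determined by a profile -/
def mfun (p : List (ℕ × ℕ)) (k : ℕ) : ℕ :=
  (p.map (fun q => min q.2 (k + 1 - q.1))).sum

lemma cnt_ge_of_take {w : List ℕ} {k t : ℕ}
    (h : ∀ x ∈ w.take t, x ≤ k) (ht : t ≤ w.length) : t ≤ cnt k w := by
  have h1 : cnt k (w.take t) = t := by
    have := (List.countP_eq_length (l := w.take t)
      (p := fun x => x ≤ k)).mpr (by simpa using h)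
    simpa [cnt, List.length_take, Nat.min_eq_left ht] using this
  have := List.countP_append (p := fun x => decide (x ≤ k)) (l₁ := w.take t) (l₂ := w.drop t)
  rw [List.take_append_drop] at this
  simp only [cnt] at *
  omega

lemma sorted_get_le_iff_cnt {s : List ℕ} (hs : s.Pairwise (· ≤ ·)) :
    (∀ i (h : i < s.length), s.get ⟨i, h⟩ ≤ i + 1) ↔
      ∀ k, k ≤ s.length → k ≤ cnt k s := by
  constructor
  · intro hg k hk
    rcases Nat.eq_zero_or_pos k with rfl | hk0
    · simp
    refine cnt_ge_of_take ?_ hk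
    intro x hx
    rw [List.mem_take_iff_getElem] at hx
    obtain ⟨i, hi, rfl⟩ := hx
    have hi' : i < s.length := by omega
    have h1 : s.get ⟨i, hi'⟩ ≤ s.get ⟨k - 1, by omega⟩ :=
      hs.rel_get_of_le (by simp; omega)
    have h2 := hg (k - 1) (by omega)
    simp only [List.get_eq_getElem] at h1 h2 ⊢
    omega
  · intro hc i hi
    by_contra hlt
    push_neg at hlt
    have hk := hc (i + 1) (by omega)
    have hdrop : cnt (i + 1) (s.drop i) = 0 := by
      rw [cnt, List.countP_eq_zero]
      intro a ha
      rw [List.mem_iff_getElem] at ha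
      obtain ⟨j, hj, rfl⟩ := ha
      have hj' : i + j < s.length := by
        have := List.length_drop (i := i) (l := s); omega
      have : s.get ⟨i, hi⟩ ≤ s.get ⟨i + j, hj'⟩ :=
        hs.rel_get_of_le (by simp)
      simp only [List.get_eq_getElem] at this hlt
      rw [List.getElem_drop]
      simp only [decide_eq_true_eq]
      omega
    have := List.countP_append (p := fun x => decide (x ≤ i + 1)) (l₁ := s.take i) (l₂ := s.drop i)
    rw [List.take_append_drop] at this
    have htk : (s.take i).countP (fun x => decide (x ≤ i + 1)) ≤ i := by
      calc (s.take i).countP (fun x => decide (x ≤ i + 1)) ≤ (s.take i).length :=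
        List.countP_le_length
      _ ≤ i := by simp
    simp only [cnt] at hk hdrop this
    omega

lemma isParking_iff (w : List ℕ) :
    IsParking w ↔ ((∀ a ∈ w, 1 ≤ a) ∧ ∀ k ≤ w.length, k ≤ cnt k w) := by
  constructor
  · rintro ⟨hpos, s, hperm, hsort, hget⟩
    refine ⟨hpos, fun k hk => ?_⟩
    have := (sorted_get_le_iff_cnt hsort).mp hget k (by rwa [hperm.length_eq])
    rwa [cnt, hperm.countP_eq] at this
  · rintro ⟨hpos, hc⟩
    refine ⟨hpos, w.insertionSort (· ≤ ·), List.perm_insertionSort _ _,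
      List.pairwise_insertionSort _ _, ?_⟩
    rw [sorted_get_le_iff_cnt (List.pairwise_insertionSort _ _)]
    intro k hk
    rw [(List.perm_insertionSort (· ≤ ·) w).length_eq] at hk
    have := hc k hk
    rwa [cnt, (List.perm_insertionSort (· ≤ ·) w).countP_eq]

/-- everything we need about a single factor -/
lemma factor_facts {f : List ℕ} (hne : f ≠ []) (hf : IsShiftedParking f) :
    (1 ≤ f.headI) ∧ (∀ x ∈ f, f.headI ≤ x ∧ x + 1 ≤ f.headI + f.length) ∧
      (∀ k, min f.length (k + 1 - f.headI) ≤ cnt k f) := by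
  obtain ⟨b, p, ⟨hpos, s, hperm, hsort, hget⟩, hpsort, rfl⟩ := hf
  have hpne : p ≠ [] := by rintro rfl; simp at hne
  have hps : s = p := hperm.eq_of_pairwise' hsort hpsort
  subst hps
  have hhead : s.headI = 1 := by
    have h0 : 0 < s.length := List.length_pos_iff.mpr hpne
    have h1 := hget 0 h0
    have h2 : 1 ≤ s.get ⟨0, h0⟩ := hpos _ (List.get_mem _ _)
    have : s.headI = s.get ⟨0, h0⟩ := by
      cases s with
      | nil => simp at hpne
      | cons a l => rfl
    omega
  have hfhead : (s.map (· + b)).headI = 1 + b := by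
    cases s with
    | nil => simp at hpne
    | cons a l => simp at hhead ⊢; omega
  rw [hfhead]
  refine ⟨by omega, ?_, ?_⟩
  · intro x hx
    rw [List.mem_map] at hx
    obtain ⟨a, ha, rfl⟩ := hx
    rw [List.mem_iff_getElem] at ha
    obtain ⟨i, hi, rfl⟩ := ha
    have h1 := hget i hi
    have h2 : 1 ≤ s.get ⟨i, hi⟩ := hpos _ (List.get_mem _ _)
    simp only [List.get_eq_getElem] at h1 h2
    simp only [List.length_map]
    omega
  · intro k
    set t := min (s.map (· + b)).length (k + 1 - (1 + b)) with ht
    have htlen : t ≤ (s.map (· + b)).length := min_le_left _ _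
    refine cnt_ge_of_take ?_ htlen
    intro x hx
    rw [← List.map_take, List.mem_map] at hx
    obtain ⟨a, ha, rfl⟩ := hx
    rw [List.mem_take_iff_getElem] at ha
    obtain ⟨i, hi, rfl⟩ := ha
    have hi' : i < s.length := by simp at hi; omega
    have h1 := hget i hi'
    simp only [List.get_eq_getElem] at h1
    simp only [List.length_map] at ht
    have : i < t := by omega
    omega

lemma profile_facts {p : List (ℕ × ℕ)} {w : List ℕ} (h : IsProfileOf p w) :
    w.length = (p.map Prod.snd).sum ∧ (∀ x ∈ w, 1 ≤ x) ∧
      (∀ k, mfun p k ≤ cnt k w) ∧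
      (∀ k, (∀ q ∈ p, k < q.1 ∨ q.1 + q.2 ≤ k) → cnt k w ≤ mfun p k) := by
  obtain ⟨ws, ⟨hjoin, hfac, -⟩, rfl⟩ := h
  subst hjoin
  refine ⟨?_, ?_, ?_, ?_⟩
  · rw [List.length_flatten, List.map_map]; rfl
  · intro x hx
    rw [List.mem_flatten] at hx
    obtain ⟨f, hf, hxf⟩ := hx
    obtain ⟨h1, h2, -⟩ := factor_facts (hfac f hf).1 (hfac f hf).2
    have := (h2 x hxf).1
    omega
  · intro k
    rw [cnt, List.countP_flatten, mfun, List.map_map]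
    apply List.sum_le_sum
    intro f hf
    simpa [cnt] using (factor_facts (hfac f hf).1 (hfac f hf).2).2.2 k
  · intro k hk
    rw [cnt, List.countP_flatten, mfun, List.map_map]
    apply List.sum_le_sum
    intro f hf
    rcases hk (f.headI, f.length) (List.mem_map.mpr ⟨f, hf, rfl⟩) with hlt | hge
    · simp only [Function.comp]
      have h2 := (factor_facts (hfac f hf).1 (hfac f hf).2).2.1
      have : List.countP (fun x => decide (x ≤ k)) f = 0 := by
        rw [List.countP_eq_zero]
        intro a ha
        have := (h2 a ha).1
        simp only [decide_eq_true_eq]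
        omega
      simp only [this]
      omega
    · simp only [Function.comp]
      have hle := List.countP_le_length (l := f) (p := fun x => decide (x ≤ k))
      simp only at hge ⊢
      omega

lemma mfun_mono (p : List (ℕ × ℕ)) (k : ℕ) : mfun p k ≤ mfun p (k + 1) := by
  apply List.sum_le_sum
  intro q hq
  omega

lemma mfun_ramp {p : List (ℕ × ℕ)} {q : ℕ × ℕ} {k : ℕ} (hq : q ∈ p)
    (h1 : q.1 ≤ k + 1) (h2 : k + 1 < q.1 + q.2) :
    mfun p k + 1 ≤ mfun p (k + 1) := by
  obtain ⟨s, t, rfl⟩ := List.append_of_mem hq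
  simp only [mfun, List.map_append, List.map_cons, List.sum_append, List.sum_cons]
  have hs := mfun_mono s k
  have ht := mfun_mono t k
  simp only [mfun] at hs ht
  have : min q.2 (k + 1 - q.1) + 1 ≤ min q.2 (k + 1 + 1 - q.1) := by omega
  omega

/-- whether `uv` is a parking function only depends on the
biprofile `(pf u, pf v)`. -/
theorem statement2 (u v u' v' : List ℕ) (pu pv : List (ℕ × ℕ))
    (hu : u.Pairwise (· ≤ ·)) (hv : v.Pairwise (· ≤ ·))
    (hu' : u'.Pairwise (· ≤ ·)) (hv' : v'.Pairwise (· ≤ ·))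
    (hpu : IsProfileOf pu u) (hpu' : IsProfileOf pu u')
    (hpv : IsProfileOf pv v) (hpv' : IsProfileOf pv v')
    (hpark : IsParking (u ++ v)) :
    IsParking (u' ++ v') := by
  obtain ⟨hlU, hposU, hmleU, hnrU⟩ := profile_facts hpu
  obtain ⟨hlV, hposV, hmleV, hnrV⟩ := profile_facts hpv
  obtain ⟨hlU', hposU', hmleU', -⟩ := profile_facts hpu'
  obtain ⟨hlV', hposV', hmleV', -⟩ := profile_facts hpv'
  rw [isParking_iff] at hpark ⊢
  obtain ⟨-, hc⟩ := hpark
  have hcnt : ∀ k (a b : List ℕ), cnt k (a ++ b) = cnt k a + cnt k b := by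
    intro k a b; exact List.countP_append
  -- the key profile-only condition
  have key : ∀ k, k ≤ u.length + v.length → k ≤ mfun pu k + mfun pv k := by
    intro k
    induction k with
    | zero => intro _; omega
    | succ n ih =>
      intro hk
      by_cases hr : (∃ q ∈ pu, q.1 ≤ n + 1 ∧ n + 1 < q.1 + q.2) ∨
          (∃ q ∈ pv, q.1 ≤ n + 1 ∧ n + 1 < q.1 + q.2)
      · rcases hr with ⟨q, hq, h1, h2⟩ | ⟨q, hq, h1, h2⟩
        · have ha := mfun_ramp hq h1 h2
          have hb := mfun_mono pv n
          have := ih (by omega)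
          omega
        · have ha := mfun_ramp hq h1 h2
          have hb := mfun_mono pu n
          have := ih (by omega)
          omega
      · push_neg at hr
        obtain ⟨hr1, hr2⟩ := hr
        have hnr1 : ∀ q ∈ pu, n + 1 < q.1 ∨ q.1 + q.2 ≤ n + 1 := by
          intro q hq
          by_cases hle : q.1 ≤ n + 1
          · exact Or.inr (by have := hr1 q hq hle; omega)
          · exact Or.inl (by omega)
        have hnr2 : ∀ q ∈ pv, n + 1 < q.1 ∨ q.1 + q.2 ≤ n + 1 := by
          intro q hq
          by_cases hle : q.1 ≤ n + 1
          · exact Or.inr (by have := hr2 q hq hle; omega)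
          · exact Or.inl (by omega)
        have e1 := hnrU (n + 1) hnr1
        have e2 := hnrV (n + 1) hnr2
        have := hc (n + 1) (by rw [List.length_append]; omega)
        rw [hcnt] at this
        omega
  have hlen : u'.length + v'.length = u.length + v.length := by
    rw [hlU, hlV, hlU', hlV']
  refine ⟨?_, ?_⟩
  · intro a ha
    rcases List.mem_append.mp ha with h | h
    exacts [hposU' a h, hposV' a h]
  · intro k hk
    rw [List.length_append] at hk
    have h1 := key k (by omega)
    have h2 := hmleU' k
    have h3 := hmleV' k
    rw [hcnt]
    omega
end

section
/- A k-parking function a of length n factors uniquely as a = a' b_1 ... b_i where a' is the maximal prefix of a (of some length i) that is a (k-1)-parking function and each b_j is a k-parking function; conversely, concatenating a (k-1)-parking function of length i with any list of i k-parking functions (in the evaluation encoding) yields a k-parking function. -/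
/-- `w` is a generalized (`k`-)Łukasiewicz word: the evaluation (recording the
number of occurrences of each letter `1, …, kn+1`) of a nondecreasing
`k`-parking function of length `n = w.sum`; equivalently `w` has length
`k·(w.sum) + 1`, and `k(w₁+⋯+wᵢ) - i ≥ 0` for all `i < kn+1` (the inequality
`< 0` at `i = kn+1` is then automatic). -/
def IsLuk (k : ℕ) (w : List ℕ) : Prop :=
  w.length = k * w.sum + 1 ∧ ∀ i < w.length, i ≤ k * (w.take i).sum

lemma sum_take_le (l : List ℕ) (i : ℕ) : (l.take i).sum ≤ l.sum := by
  conv_rhs => rw [← List.take_append_drop i l]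
  rw [List.sum_append]
  exact Nat.le_add_right _ _

lemma sum_take_mono (l : List ℕ) {i j : ℕ} (h : i ≤ j) :
    (l.take i).sum ≤ (l.take j).sum := by
  have := sum_take_le (l.take j) i
  rwa [List.take_take, min_eq_left h] at this

lemma luk_no_proper_prefix {k : ℕ} {w : List ℕ} (h : IsLuk k w) {j : ℕ}
    (hj : j < w.length) : ¬ IsLuk k (w.take j) := by
  rintro ⟨h1, -⟩
  rw [List.length_take, min_eq_left hj.le] at h1
  have h2 := h.2 j hj
  omega

lemma hit_aux (f : ℕ → ℕ) (hf0 : f 0 = 1) (hmono : ∀ i, f i ≤ f (i + 1)) :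
    ∀ i, (∀ j, j ≤ i → f j ≠ j) → i < f i := by
  intro i
  induction i with
  | zero => intro _; omega
  | succ n ih =>
    intro h
    have h1 := ih fun j hj => h j (by omega)
    have h2 := hmono n
    have h3 := h (n + 1) le_rfl
    omega

lemma exists_hit (f : ℕ → ℕ) (hf0 : f 0 = 1) (hmono : ∀ i, f i ≤ f (i + 1))
    (N : ℕ) (hN : f N ≤ N) :
    ∃ t, t ≤ N ∧ f t = t ∧ ∀ i < t, i < f i := by
  classical
  have hex : ∃ t, t ≤ N ∧ f t = t := by
    by_contra hc
    push_neg at hc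
    have := hit_aux f hf0 hmono N hc
    omega
  refine ⟨Nat.find hex, (Nat.find_spec hex).1, (Nat.find_spec hex).2, ?_⟩
  intro i hi
  apply hit_aux f hf0 hmono
  intro j hj
  have hjlt : j < Nat.find hex := lt_of_le_of_lt hj hi
  have hmin := Nat.find_min hex hjlt
  push_neg at hmin
  exact hmin (le_trans hj (le_trans hi.le (Nat.find_spec hex).1))

lemma blocks (k : ℕ) : ∀ n (s : List ℕ), s.length = k * s.sum + n →
    (∀ i < s.length, i + 1 ≤ n + k * (s.take i).sum) →
    ∃ bs : List (List ℕ), bs.length = n ∧ (∀ b ∈ bs, IsLuk k b) ∧ bs.flatten = s := by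
  intro n
  induction n with
  | zero =>
    intro s h1 h2
    refine ⟨[], rfl, by simp, ?_⟩
    rcases s with _ | ⟨x, s⟩
    · rfl
    · exfalso
      have := h2 0 (by simp)
      simp at this
  | succ n ih =>
    intro s h1 h2
    obtain ⟨t, htN, hteq, htmin⟩ := exists_hit (fun i => k * (s.take i).sum + 1)
      (by simp) (fun i => by
        show k * (s.take i).sum + 1 ≤ k * (s.take (i + 1)).sum + 1
        have h0 := sum_take_mono s (by omega : i ≤ i + 1)
        have h1 := Nat.mul_le_mul (le_refl k) h0
        omega)
      s.length (by simp only [List.take_length]; omega)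
    set b := s.take t with hbdef
    set s' := s.drop t with hs'def
    have hbs : b ++ s' = s := List.take_append_drop t s
    have hblen : b.length = t := by rw [hbdef, List.length_take, min_eq_left htN]
    have hbluk : IsLuk k b := by
      constructor
      · rw [hblen]; omega
      · intro i hi
        rw [hblen] at hi
        have h3 := htmin i hi
        have h4 : b.take i = s.take i := by
          rw [hbdef, List.take_take, min_eq_left hi.le]
        rw [h4]; omega
    have hsum : s.sum = b.sum + s'.sum := by rw [← hbs, List.sum_append]
    have hlen : s.length = b.length + s'.length := by rw [← hbs, List.length_append]
    have e1 : k * s.sum = k * b.sum + k * s'.sum := by rw [hsum, Nat.mul_add]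
    have h1' : s'.length = k * s'.sum + n := by omega
    have h2' : ∀ i < s'.length, i + 1 ≤ n + k * (s'.take i).sum := by
      intro i hi
      have h5 := h2 (t + i) (by omega)
      have h6 : s.take (t + i) = b ++ s'.take i := by
        rw [← hbs, ← hblen, List.take_length_add_append]
      rw [h6, List.sum_append] at h5
      have e2 : k * (b.sum + (s'.take i).sum) = k * b.sum + k * (s'.take i).sum :=
        Nat.mul_add _ _ _
      omega
    obtain ⟨bs, hb1, hb2, hb3⟩ := ih s' h1' h2'
    refine ⟨b :: bs, by simp [hb1], ?_, by simp [hb3, hbs]⟩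
    intro b' hb'
    rcases List.mem_cons.mp hb' with rfl | h
    · exact hbluk
    · exact hb2 _ h

lemma join_luk (k : ℕ) : ∀ bs : List (List ℕ), (∀ b ∈ bs, IsLuk k b) →
    bs.flatten.length = k * bs.flatten.sum + bs.length ∧
    ∀ i < bs.flatten.length, i + 1 ≤ bs.length + k * (bs.flatten.take i).sum := by
  intro bs
  induction bs with
  | nil => intro _; simp
  | cons b r ih =>
    intro hmem
    have hb := hmem b (by simp)
    obtain ⟨ih1, ih2⟩ := ih fun b' h => hmem b' (by simp [h])
    have hb1 := hb.1
    constructor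
    · simp only [List.flatten_cons, List.length_append, List.sum_append, List.length_cons]
      have := Nat.mul_add k b.sum r.flatten.sum
      omega
    · intro i hi
      simp only [List.flatten_cons, List.length_append] at hi
      simp only [List.flatten_cons, List.length_cons]
      rcases lt_or_ge i b.length with h | h
      · have h5 := hb.2 i h
        rw [List.take_append_of_le_length h.le]
        omega
      · obtain ⟨i', rfl⟩ : ∃ i', i = b.length + i' := ⟨i - b.length, by omega⟩
        have hi' : i' < r.flatten.length := by omega
        have h5 := ih2 i' hi'
        rw [List.take_length_add_append, List.sum_append]
        have := Nat.mul_add k b.sum (r.flatten.take i').sum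
        omega

lemma first_block_aux {k : ℕ} {b b' u v : List ℕ} (hb : IsLuk k b) (hb' : IsLuk k b')
    (h : b ++ u = b' ++ v) (hle : b.length ≤ b'.length) : b = b' := by
  have hpre : b = b'.take b.length := by
    have h2 := congrArg (List.take b.length) h
    rwa [List.take_left, List.take_append_of_le_length hle] at h2
  rcases eq_or_lt_of_le hle with heq | hlt
  · rw [hpre, heq, List.take_length]
  · exact absurd (hpre ▸ hb) (luk_no_proper_prefix hb' hlt)

lemma first_block_eq {k : ℕ} {b b' u v : List ℕ} (hb : IsLuk k b) (hb' : IsLuk k b')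
    (h : b ++ u = b' ++ v) : b = b' := by
  rcases le_total b.length b'.length with hle | hle
  · exact first_block_aux hb hb' h hle
  · exact (first_block_aux hb' hb h.symm hle).symm

lemma blocks_unique {k : ℕ} : ∀ bs bs' : List (List ℕ), (∀ b ∈ bs, IsLuk k b) →
    (∀ b ∈ bs', IsLuk k b) → bs.length = bs'.length → bs.flatten = bs'.flatten → bs = bs' := by
  intro bs
  induction bs with
  | nil =>
    intro bs' _ _ hl _
    cases bs' with
    | nil => rfl
    | cons => simp at hl
  | cons b r ih =>
    intro bs' h1 h2 hl hj
    cases bs' with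
    | nil => simp at hl
    | cons b' r' =>
      simp only [List.flatten_cons] at hj
      have hbb : b = b' := first_block_eq (h1 b (by simp)) (h2 b' (by simp)) hj
      subst hbb
      have hjr : r.flatten = r'.flatten := List.append_cancel_left hj
      have := ih r' (fun x hx => h1 x (by simp [hx])) (fun x hx => h2 x (by simp [hx]))
        (by simpa using hl) hjr
      rw [this]

/-- in the evaluation encoding: a `k`-parking function `a`
factors uniquely as `a = a' b₁ ⋯ bᵢ` where `a'` is the maximal prefix of `a`
that is a `(k-1)`-parking function, `i` is the length of `a'` as a parking
function (the sum of its evaluation), and each `b_j` is a `k`-parking function;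
conversely any such concatenation is a `k`-parking function. -/
theorem statement4 (k : ℕ) (hk : 1 ≤ k) :
    (∀ w : List ℕ, IsLuk k w →
      ∃! d : List ℕ × List (List ℕ),
        IsLuk (k - 1) d.1 ∧
        (∀ j, d.1.length < j → j ≤ w.length → ¬ IsLuk (k - 1) (w.take j)) ∧
        d.2.length = d.1.sum ∧
        (∀ b ∈ d.2, IsLuk k b) ∧
        w = d.1 ++ d.2.flatten) ∧
    ∀ (a : List ℕ) (bs : List (List ℕ)), IsLuk (k - 1) a → bs.length = a.sum →
      (∀ b ∈ bs, IsLuk k b) → IsLuk k (a ++ bs.flatten) := by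
  have hkn : ∀ x : ℕ, k * x = (k - 1) * x + x := by
    intro x
    cases k with
    | zero => omega
    | succ k' => simp [Nat.succ_sub_one, Nat.succ_mul]
  constructor
  · -- existence and uniqueness of the factorization
    intro w hw
    obtain ⟨t, htN, hteq, htmin⟩ := exists_hit (fun i => (k - 1) * (w.take i).sum + 1)
      (by simp) (fun i => by
        show (k - 1) * (w.take i).sum + 1 ≤ (k - 1) * (w.take (i + 1)).sum + 1
        have h0 := sum_take_mono w (by omega : i ≤ i + 1)
        have h1 := Nat.mul_le_mul (le_refl (k - 1)) h0
        omega)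
      w.length (by
        simp only [List.take_length]
        have h1 := hw.1
        have h2 : (k - 1) * w.sum ≤ k * w.sum := Nat.mul_le_mul (by omega) le_rfl
        omega)
    set a := w.take t with hadef
    set s := w.drop t with hsdef
    have has : a ++ s = w := List.take_append_drop t w
    have halen : a.length = t := by rw [hadef, List.length_take, min_eq_left htN]
    have haluk : IsLuk (k - 1) a := by
      constructor
      · rw [halen]; omega
      · intro i hi
        rw [halen] at hi
        have h3 := htmin i hi
        have h4 : a.take i = w.take i := by
          rw [hadef, List.take_take, min_eq_left hi.le]
        rw [h4]; omega
    have hsum : w.sum = a.sum + s.sum := by rw [← has, List.sum_append]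
    have hlen : w.length = a.length + s.length := by rw [← has, List.length_append]
    have hw1 := hw.1
    have e1 : k * w.sum = k * a.sum + k * s.sum := by rw [hsum, Nat.mul_add]
    have e2 := hkn a.sum
    have h1' : s.length = k * s.sum + a.sum := by omega
    have h2' : ∀ i < s.length, i + 1 ≤ a.sum + k * (s.take i).sum := by
      intro i hi
      have h5 := hw.2 (t + i) (by omega)
      have h6 : w.take (t + i) = a ++ s.take i := by
        rw [← has, ← halen, List.take_length_add_append]
      rw [h6, List.sum_append] at h5
      have e3 : k * (a.sum + (s.take i).sum) = k * a.sum + k * (s.take i).sum :=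
        Nat.mul_add _ _ _
      omega
    obtain ⟨bs, hb1, hb2, hb3⟩ := blocks k a.sum s h1' h2'
    have hmax : ∀ j, a.length < j → j ≤ w.length → ¬ IsLuk (k - 1) (w.take j) := by
      intro j hj1 hj2 hcon
      rw [halen] at hj1
      have hlt : t < (w.take j).length := by
        rw [List.length_take, min_eq_left hj2]; omega
      have h7 : (w.take j).take t = a := by
        rw [List.take_take, min_eq_left (by omega : t ≤ j)]
      exact luk_no_proper_prefix hcon hlt (by rw [h7]; exact haluk)
    refine ⟨(a, bs), ⟨haluk, hmax, hb1, hb2, by rw [hb3]; exact has.symm⟩, ?_⟩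
    rintro ⟨a', bs'⟩ ⟨h1u, h2u, h3u, h4u, h5u⟩
    simp only at h1u h2u h3u h4u h5u ⊢
    have ha'N : a'.length ≤ w.length := by
      rw [h5u, List.length_append]; omega
    have ha'pre : a' = w.take a'.length := by
      rw [h5u]; exact List.take_left.symm
    have haa : a' = a := by
      rcases lt_trichotomy a'.length t with hcase | hcase | hcase
      · exact absurd haluk (h2u t hcase htN)
      · rw [ha'pre, hcase]
      · exfalso
        have h1'' : IsLuk (k - 1) (w.take a'.length) := ha'pre ▸ h1u
        have hlt : t < (w.take a'.length).length := by
          rw [List.length_take, min_eq_left ha'N]; omega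
        have h7 : (w.take a'.length).take t = a := by
          rw [List.take_take, min_eq_left (by omega : t ≤ a'.length)]
        exact luk_no_proper_prefix h1'' hlt (by rw [h7]; exact haluk)
    subst haa
    have hjoins : bs'.flatten = bs.flatten := by
      have h9 : a ++ bs.flatten = a ++ bs'.flatten := by rw [hb3, has]; exact h5u
      exact (List.append_cancel_left h9).symm
    have hbb : bs' = bs := blocks_unique bs' bs h4u hb2 (by omega) hjoins
    rw [hbb]
  · -- converse
    intro a bs ha hlen hb
    obtain ⟨j1, j2⟩ := join_luk k bs hb
    have ha1 := ha.1
    constructor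
    · rw [List.length_append, List.sum_append]
      have e1 : k * (a.sum + bs.flatten.sum) = k * a.sum + k * bs.flatten.sum :=
        Nat.mul_add _ _ _
      have e2 := hkn a.sum
      omega
    · intro i hi
      rw [List.length_append] at hi
      rcases lt_or_ge i a.length with h | h
      · have h5 := ha.2 i h
        rw [List.take_append_of_le_length h.le]
        have : (k - 1) * (a.take i).sum ≤ k * (a.take i).sum :=
          Nat.mul_le_mul (by omega) le_rfl
        omega
      · obtain ⟨i', rfl⟩ : ∃ i', i = a.length + i' := ⟨i - a.length, by omega⟩
        have hi' : i' < bs.flatten.length := by omega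
        have h5 := j2 i' hi'
        rw [List.take_length_add_append, List.sum_append]
        have e1 : k * (a.sum + (bs.flatten.take i').sum)
            = k * a.sum + k * (bs.flatten.take i').sum := Nat.mul_add _ _ _
        have e2 := hkn a.sum
        omega
end

section
/- In a binary search tree on n nodes labeled 1..n in infix (in-order) order, for each i one gets from the node labeled i to the node labeled i+1 mod n by the following rule: first move one step down the right branch containing i (if i is at the bottom of its right branch, jump to the top of that right branch), then move one step up the left branch containing the current node (if at the top of that left branch, jump to its bottom). -/
/-- Binary trees. -/
inductive BT : Type
  | leaf : BT
  | node : BT → BT → BT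
  deriving DecidableEq

namespace BT

/-- The subtree of `t` rooted at the position `p` (a path of directions from the
root, `false` = left, `true` = right). -/
def subtree : BT → List Bool → BT
  | t, [] => t
  | leaf, _ :: _ => leaf
  | node l r, d :: p => subtree (if d then r else l) p

/-- The positions of the nodes of `t`, in infix (in-order) order; the node
labeled `i` (0-indexed) is `(inorder t).get i`. -/
def inorder : BT → List (List Bool)
  | leaf => []
  | node l r =>
      (inorder l).map (List.cons false) ++ [[]] ++ (inorder r).map (List.cons true)

/-- Number of nodes on the leftmost chain (following left children) of `t`. -/
def leftChainLen : BT → ℕ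
  | leaf => 0
  | node l _ => leftChainLen l + 1

/-- Remove the trailing occurrences of `b` from a path: this yields the top of
the right branch (`b = true`), resp. left branch (`b = false`), through this
node. -/
def stripTrail (b : Bool) (p : List Bool) : List Bool :=
  (p.reverse.dropWhile (· == b)).reverse

/-- One application of the rule: from the node at position `p`, move one step
down the right branch containing it (if it has no right child, i.e. is at the
bottom of this right branch, jump to the top of that branch); then move one
step up the left branch containing the current node (if the current node is not
a left child, i.e. is at the top of its left branch, jump to the bottom of that
branch, obtained by following left children all the way down). -/
def step (t : BT) (p : List Bool) : List Bool :=
  let q := if subtree t (p ++ [true]) ≠ leaf then p ++ [true] else stripTrail true p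
  if q.getLast? = some false then q.dropLast
  else q ++ List.replicate (leftChainLen (subtree t q) - 1) false

/- ### auxiliary -/

def rlen : BT → ℕ
  | leaf => 0
  | node _ r => rlen r + 1

def qfun (t : BT) (p : List Bool) : List Bool :=
  if subtree t (p ++ [true]) ≠ leaf then p ++ [true] else stripTrail true p

lemma step_def (t : BT) (p : List Bool) : step t p =
    if (qfun t p).getLast? = some false then (qfun t p).dropLast
    else qfun t p ++ List.replicate (leftChainLen (subtree t (qfun t p)) - 1) false := rfl

lemma subtree_cons_false (l r : BT) (p : List Bool) :
    subtree (node l r) (false :: p) = subtree l p := rfl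

lemma subtree_cons_true (l r : BT) (p : List Bool) :
    subtree (node l r) (true :: p) = subtree r p := rfl

lemma subtree_replicate_rlen (t : BT) : subtree t (List.replicate (rlen t) true) = leaf := by
  induction t with
  | leaf => rfl
  | node l r ihl ihr => rw [rlen, List.replicate_succ, subtree_cons_true]; exact ihr

lemma stripTrail_replicate (k : ℕ) : stripTrail true (List.replicate k true) = [] := by
  simp [stripTrail, List.dropWhile_replicate]

lemma stripTrail_cons_false (p : List Bool) :
    stripTrail true (false :: p) = false :: stripTrail true p := by
  unfold stripTrail
  rw [List.reverse_cons, List.dropWhile_append]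
  split <;> simp_all [List.dropWhile]

lemma stripTrail_cons_true (p : List Bool) (h : stripTrail true p ≠ []) :
    stripTrail true (true :: p) = true :: stripTrail true p := by
  unfold stripTrail at *
  rw [List.reverse_cons, List.dropWhile_append]
  split <;> simp_all [List.dropWhile]

lemma qfun_cons_false (l r : BT) (p : List Bool) :
    qfun (node l r) (false :: p) = false :: qfun l p := by
  unfold qfun
  rw [List.cons_append, subtree_cons_false]
  split <;> simp [stripTrail_cons_false]

lemma qfun_cons_true (l r : BT) (p : List Bool) (h : qfun r p ≠ []) :
    qfun (node l r) (true :: p) = true :: qfun r p := by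
  unfold qfun at *
  rw [List.cons_append, subtree_cons_true]
  split
  · simp
  · rename_i hs
    rw [if_neg hs] at h
    exact stripTrail_cons_true p h

lemma step_cons_false (l r : BT) (p : List Bool) (h : qfun l p ≠ []) :
    step (node l r) (false :: p) = false :: step l p := by
  rw [step_def, step_def, qfun_cons_false]
  rcases List.eq_nil_or_concat (qfun l p) with h0 | ⟨q', b, h0⟩
  · exact absurd h0 h
  rw [List.concat_eq_append] at h0
  rw [h0, ← List.cons_append, List.getLast?_concat, List.getLast?_concat]
  by_cases hb : b = false
  · subst hb; rw [if_pos rfl, if_pos rfl, List.dropLast_concat, List.dropLast_concat]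
  · rw [if_neg (by simpa using hb), if_neg (by simpa using hb), List.cons_append,
      ← h0, subtree_cons_false, h0]
    simp

lemma step_cons_true (l r : BT) (p : List Bool) (h : qfun r p ≠ []) :
    step (node l r) (true :: p) = true :: step r p := by
  rw [step_def, step_def, qfun_cons_true l r p h]
  rcases List.eq_nil_or_concat (qfun r p) with h0 | ⟨q', b, h0⟩
  · exact absurd h0 h
  rw [List.concat_eq_append] at h0
  rw [h0, ← List.cons_append, List.getLast?_concat, List.getLast?_concat]
  by_cases hb : b = false
  · subst hb; rw [if_pos rfl, if_pos rfl, List.dropLast_concat, List.dropLast_concat]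
  · rw [if_neg (by simpa using hb), if_neg (by simpa using hb), List.cons_append,
      ← h0, subtree_cons_true, h0]
    simp


lemma inorder_node (l r : BT) :
    inorder (node l r) =
      (inorder l).map (List.cons false) ++ [[]] ++ (inorder r).map (List.cons true) := rfl

lemma length_inorder_node (l r : BT) :
    (inorder (node l r)).length = (inorder l).length + 1 + (inorder r).length := by
  simp [inorder_node]; omega

lemma inorder_eq_nil (t : BT) : inorder t = [] ↔ t = leaf := by
  cases t <;> simp [inorder, inorder_node]

lemma length_inorder_pos (t : BT) (h : t ≠ leaf) : 0 < (inorder t).length := by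
  rcases Nat.eq_zero_or_pos (inorder t).length with h0 | h0
  · exact absurd ((inorder_eq_nil t).mp (List.length_eq_zero_iff.mp h0)) h
  · exact h0

lemma lcl_pos (t : BT) (h : t ≠ leaf) : 0 < leftChainLen t := by
  cases t with
  | leaf => exact absurd rfl h
  | node l r => simp [leftChainLen]

lemma rlen_pos (t : BT) (h : t ≠ leaf) : 0 < rlen t := by
  cases t with
  | leaf => exact absurd rfl h
  | node l r => simp [rlen]

lemma getElem_congr' (l : List (List Bool)) (i j : ℕ) (h : i = j) (hi : i < l.length) :
    l[i] = l[j]'(h ▸ hi) := by subst h; rfl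

lemma get_left {l r : BT} {i : ℕ} (h : i < (inorder l).length) :
    (inorder (node l r))[i]'(by rw [length_inorder_node]; omega) = false :: (inorder l)[i] := by
  simp only [inorder_node]
  rw [List.getElem_append_left (by simpa using Nat.lt_add_right 1 h),
    List.getElem_append_left (by simpa using h), List.getElem_map]

lemma get_mid {l r : BT} :
    (inorder (node l r))[(inorder l).length]'(by rw [length_inorder_node]; omega) = [] := by
  simp only [inorder_node]
  rw [List.getElem_append_left (by simp), List.getElem_append_right (by simp)]
  simp

lemma get_right {l r : BT} {j : ℕ} (h : j < (inorder r).length) :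
    (inorder (node l r))[(inorder l).length + 1 + j]'(by rw [length_inorder_node]; omega) =
      true :: (inorder r)[j] := by
  simp only [inorder_node]
  rw [List.getElem_append_right (by simp only [List.length_append, List.length_map, List.length_singleton]; omega), List.getElem_map]
  congr 1
  exact getElem_congr' _ _ _ (by simp only [List.length_append, List.length_map,
    List.length_cons, List.length_nil]; omega) _

lemma get_zero {t : BT} (h : 0 < (inorder t).length) :
    (inorder t)[0] = List.replicate (leftChainLen t - 1) false := by
  induction t with
  | leaf => simp [inorder] at h
  | node l r ihl ihr =>
    by_cases hl : l = leaf
    · subst hl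
      have h0 : (0:ℕ) = (inorder (leaf : BT)).length := by simp [inorder]
      rw [getElem_congr' _ 0 (inorder (leaf : BT)).length h0, get_mid]
      simp [leftChainLen]
    · have hL : 0 < (inorder l).length := length_inorder_pos l hl
      rw [get_left hL, ihl hL]
      have : leftChainLen l - 1 + 1 = leftChainLen l := Nat.succ_pred_eq_of_pos (lcl_pos l hl)
      rw [show (false :: List.replicate (leftChainLen l - 1) false) =
        List.replicate (leftChainLen l - 1 + 1) false from rfl, this]
      simp [leftChainLen]

lemma get_last {t : BT} (h : 0 < (inorder t).length) :
    (inorder t)[(inorder t).length - 1]'(by omega) = List.replicate (rlen t - 1) true := by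
  induction t with
  | leaf => simp [inorder] at h
  | node l r ihl ihr =>
    by_cases hr : r = leaf
    · subst hr
      have h0 : (inorder (node l leaf)).length - 1 = (inorder l).length := by
        rw [length_inorder_node]; simp [inorder]
      rw [getElem_congr' _ _ _ h0, get_mid]
      simp [rlen]
    · have hR : 0 < (inorder r).length := length_inorder_pos r hr
      have h0 : (inorder (node l r)).length - 1 =
          (inorder l).length + 1 + ((inorder r).length - 1) := by
        rw [length_inorder_node]; omega
      rw [getElem_congr' _ _ _ h0, get_right (by omega), ihr hR]
      have : rlen r - 1 + 1 = rlen r := Nat.succ_pred_eq_of_pos (rlen_pos r hr)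
      rw [show (true :: List.replicate (rlen r - 1) true) =
        List.replicate (rlen r - 1 + 1) true from rfl, this]
      simp [rlen]

lemma inorder_nodup (t : BT) : (inorder t).Nodup := by
  induction t with
  | leaf => simp [inorder]
  | node l r ihl ihr =>
    have hL := ihl.map (f := List.cons false) fun a b hab => by injection hab
    have hR := ihr.map (f := List.cons true) fun a b hab => by injection hab
    rw [inorder_node, List.append_assoc]
    refine List.Nodup.append hL (List.Nodup.append (by simp) hR ?_) ?_
    · intro a ha hb
      simp at ha
      subst ha
      simp at hb
    · intro a ha hb
      simp at ha
      obtain ⟨x, _, rfl⟩ := ha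
      rcases List.mem_append.mp hb with hb | hb <;> simp at hb


lemma mod_small {a n b : ℕ} (h1 : a < n) (h2 : a = b) : a % n = b := by
  rw [Nat.mod_eq_of_lt h1, h2]

lemma mod_wrap {a n : ℕ} (h : a = n) : a % n = 0 := by
  rw [h, Nat.mod_self]

lemma step_of_qfun_nil (t : BT) (p : List Bool) (h0 : qfun t p = []) :
    step t p = List.replicate (leftChainLen t - 1) false := by
  rw [step_def, h0]
  simp [subtree]

lemma qfun_of_last (t : BT) (h : t ≠ leaf) :
    qfun t (List.replicate (rlen t - 1) true) = [] := by
  unfold qfun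
  have h1 : List.replicate (rlen t - 1) true ++ [true] = List.replicate (rlen t) true := by
    rw [← List.replicate_succ']
    congr 1
    exact Nat.succ_pred_eq_of_pos (rlen_pos t h)
  rw [h1, subtree_replicate_rlen, if_neg (by simp), stripTrail_replicate]

/-- in a binary search tree (nodes labeled `0,…,n-1` in infix
order), the above rule takes the node labeled `i` to the node labeled
`i + 1 mod n`. -/
theorem statement5 (t : BT) (i : ℕ) (h : i < (inorder t).length) :
    step t ((inorder t).get ⟨i, h⟩) =
      (inorder t).get ⟨(i + 1) % (inorder t).length, Nat.mod_lt _ (by omega)⟩ := by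
  simp only [List.get_eq_getElem]
  induction t generalizing i with
  | leaf => simp [inorder] at h
  | node l r ihl ihr =>
    have hlen := length_inorder_node l r
    by_cases hiL : i < (inorder l).length
    · -- i is in the left subtree
      have hl : l ≠ leaf := by
        intro h0; rw [h0] at hiL; simp [inorder] at hiL
      rw [get_left hiL]
      by_cases hi1 : i + 1 < (inorder l).length
      · -- successor also in left subtree
        have ih : step l (inorder l)[i] = (inorder l)[i + 1] :=
          (ihl i hiL).trans (getElem_congr' _ _ _ (Nat.mod_eq_of_lt hi1) _)
        have hq : qfun l (inorder l)[i] ≠ [] := by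
          intro h0
          have h1 : (inorder l)[i + 1]'hi1 = (inorder l)[0]'(by omega) := by
            rw [← ih, step_of_qfun_nil l _ h0, get_zero (by omega)]
          have := ((inorder_nodup l).getElem_inj_iff).mp h1
          omega
        rw [step_cons_false l r _ hq, ih,
          getElem_congr' _ _ (i + 1) (Nat.mod_eq_of_lt (by omega)), get_left hi1]
      · -- i is the last node of the left subtree; successor is the root
        have hi2 : i = (inorder l).length - 1 := by omega
        have h1 : (inorder l)[i] = List.replicate (rlen l - 1) true := by
          rw [getElem_congr' _ _ _ hi2]
          exact get_last (by omega)
        have hq : qfun (node l r) (false :: (inorder l)[i]) = [false] := by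
          rw [qfun_cons_false, h1, qfun_of_last l hl]
        rw [step_def, hq]
        simp only [List.getLast?_singleton, if_pos rfl]
        rw [getElem_congr' _ _ ((inorder l).length) (mod_small (by omega) (by omega)), get_mid]
        simp
    · by_cases hiM : i = (inorder l).length
      · -- i is the root
        subst hiM
        rw [get_mid]
        by_cases hr : r = leaf
        · -- the root is the last node: wrap around to node 0
          subst hr
          have hq : qfun (node l leaf) [] = [] := by
            unfold qfun
            rw [if_neg (by simp [subtree]), stripTrail]
            simp
          have hE : (inorder (leaf : BT)).length = 0 := rfl
          rw [step_of_qfun_nil _ _ hq,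
            getElem_congr' _ _ 0 (mod_wrap (by omega)), ← get_zero (by omega)]
        · -- successor is the leftmost node of the right subtree
          have hR : 0 < (inorder r).length := length_inorder_pos r hr
          have hq : qfun (node l r) [] = [true] := by
            unfold qfun
            rw [if_pos (by simpa [subtree] using hr)]
            rfl
          rw [step_def, hq]
          have hlast : ([true] : List Bool).getLast? = some true := rfl
          rw [hlast, if_neg (by simp), subtree_cons_true]
          have : subtree r [] = r := by cases r <;> rfl
          rw [this]
          rw [getElem_congr' _ _ ((inorder l).length + 1 + 0) (mod_small (by omega) (by omega)),
            get_right hR,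
            get_zero hR]
          rfl
      · -- i is in the right subtree
        have hr : r ≠ leaf := by
          intro h0
          have hE : (inorder r).length = 0 := by rw [h0]; rfl
          omega
        have hR : 0 < (inorder r).length := length_inorder_pos r hr
        obtain ⟨j, hj, rfl⟩ : ∃ j, j < (inorder r).length ∧ i = (inorder l).length + 1 + j :=
          ⟨i - (inorder l).length - 1, by omega, by omega⟩
        rw [get_right hj]
        by_cases hj1 : j + 1 < (inorder r).length
        · -- successor also in right subtree
          have ih : step r (inorder r)[j] = (inorder r)[j + 1] :=
            (ihr j hj).trans (getElem_congr' _ _ _ (Nat.mod_eq_of_lt hj1) _)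
          have hq : qfun r (inorder r)[j] ≠ [] := by
            intro h0
            have h1 : (inorder r)[j + 1]'hj1 = (inorder r)[0]'(by omega) := by
              rw [← ih, step_of_qfun_nil r _ h0, get_zero (by omega)]
            have := ((inorder_nodup r).getElem_inj_iff).mp h1
            omega
          rw [step_cons_true l r _ hq, ih,
            getElem_congr' _ _ ((inorder l).length + 1 + (j + 1)) (mod_small (by omega) (by omega)),
            get_right hj1]
        · -- i is the last node overall: wrap around to node 0
          have hj2 : j = (inorder r).length - 1 := by omega
          have h1 : (inorder r)[j] = List.replicate (rlen r - 1) true := by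
            rw [getElem_congr' _ _ _ hj2]
            exact get_last hR
          have h2 : true :: (inorder r)[j] = List.replicate (rlen (node l r) - 1) true := by
            rw [h1, rlen,
              show true :: List.replicate (rlen r - 1) true =
                List.replicate (rlen r - 1 + 1) true from rfl,
              ]
            congr 1
            have := rlen_pos r hr
            omega
          have hq : qfun (node l r) (true :: (inorder r)[j]) = [] := by
            rw [h2]
            exact qfun_of_last _ (by simp)
          rw [step_of_qfun_nil _ _ hq,
            getElem_congr' _ _ 0 (mod_wrap (by omega)), ← get_zero (by omega)]

end BT
end

section
/- The map sending a noncrossing partition π of [n+1] to the pair (t(π), t(K(π))) of ordered types of π and of its right Kreweras complement K(π) is injective. -/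
open Finset

/-- A finite set partition of `Fin m` is noncrossing if there are no
`a < b < c < d` with `a, c` in one block and `b, d` in a different block. -/
def Noncrossing {m : ℕ} (P : Finpartition (univ : Finset (Fin m))) : Prop :=
  ∀ a b c d : Fin m, a < b → b < c → c < d →
    c ∈ P.part a → d ∈ P.part b → b ∈ P.part a

/-- The ordered type of a set partition of `Fin m`: the composition listing the
block sizes in increasing order of the minima of the blocks (each block is
recorded at its minimum). -/
def orderedType {m : ℕ} (P : Finpartition (univ : Finset (Fin m))) : List ℕ :=
  ((List.finRange m).filter fun i => decide (∀ j ∈ P.part i, i ≤ j)).map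
    fun i => (P.part i).card

/-- The permutation (as a function) `w_P` associated with a partition `P`:
its cycles are the blocks of `P`, each arranged as a cycle in increasing
order. -/
def wfun {m : ℕ} (P : Finpartition (univ : Finset (Fin m))) (x : Fin m) : Fin m :=
  if h : ((P.part x).filter fun y => x < y).Nonempty then
    ((P.part x).filter fun y => x < y).min' h
  else if h2 : (P.part x).Nonempty then (P.part x).min' h2 else x

namespace NCaux

variable {m : ℕ}

lemma mem_part_self (P : Finpartition (univ : Finset (Fin m))) (x : Fin m) :
    x ∈ P.part x := P.mem_part (mem_univ x)

lemma part_eq_part (P : Finpartition (univ : Finset (Fin m))) {x y : Fin m}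
    (h : y ∈ P.part x) : P.part y = P.part x :=
  (P.mem_part_iff_part_eq_part (mem_univ y) (mem_univ x)).1 h

/-- the minimum of the block of `x` -/
def mu (P : Finpartition (univ : Finset (Fin m))) (x : Fin m) : Fin m :=
  (P.part x).min' ⟨x, mem_part_self P x⟩

lemma mu_mem (P : Finpartition (univ : Finset (Fin m))) (x : Fin m) :
    mu P x ∈ P.part x := Finset.min'_mem _ _

lemma mu_le (P : Finpartition (univ : Finset (Fin m))) (x : Fin m) : mu P x ≤ x :=
  Finset.min'_le _ _ (mem_part_self P x)

lemma mu_le_of_mem (P : Finpartition (univ : Finset (Fin m))) {x y : Fin m}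
    (h : y ∈ P.part x) : mu P x ≤ y := Finset.min'_le _ _ h

lemma part_mu (P : Finpartition (univ : Finset (Fin m))) (x : Fin m) :
    P.part (mu P x) = P.part x := part_eq_part P (mu_mem P x)

lemma mu_congr (P : Finpartition (univ : Finset (Fin m))) {x y : Fin m}
    (h : P.part y = P.part x) : mu P y = mu P x := by
  apply le_antisymm
  · exact Finset.min'_le _ _ (h ▸ mu_mem P x)
  · exact Finset.min'_le _ _ (h.symm ▸ mu_mem P y)

lemma mu_mu (P : Finpartition (univ : Finset (Fin m))) (x : Fin m) :
    mu P (mu P x) = mu P x := mu_congr P (part_mu P x)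

lemma mem_iff_mu (P : Finpartition (univ : Finset (Fin m))) {x y : Fin m} :
    y ∈ P.part x ↔ mu P y = mu P x := by
  constructor
  · exact fun h => mu_congr P (part_eq_part P h)
  · intro h
    have h1 : P.part (mu P y) = P.part y := part_mu P y
    have h2 : P.part (mu P x) = P.part x := part_mu P x
    rw [h] at h1
    rw [← h1.symm.trans h2]
    exact mem_part_self P y

/-- block-minimum predicate -/
def BMin (P : Finpartition (univ : Finset (Fin m))) (x : Fin m) : Prop :=
  ∀ j ∈ P.part x, x ≤ j

def BMax (P : Finpartition (univ : Finset (Fin m))) (x : Fin m) : Prop :=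
  ∀ j ∈ P.part x, j ≤ x

lemma bmin_iff_mu (P : Finpartition (univ : Finset (Fin m))) (x : Fin m) :
    BMin P x ↔ mu P x = x := by
  constructor
  · exact fun h => le_antisymm (mu_le P x) (h _ (mu_mem P x))
  · intro h j hj
    rw [← h]; exact mu_le_of_mem P hj

lemma bmin_mu (P : Finpartition (univ : Finset (Fin m))) (x : Fin m) :
    BMin P (mu P x) := by
  intro j hj
  rw [part_mu] at hj
  exact mu_le_of_mem P hj

lemma wfun_mem (P : Finpartition (univ : Finset (Fin m))) (x : Fin m) :
    wfun P x ∈ P.part x := by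
  unfold wfun
  split
  · next h => exact Finset.filter_subset _ _ (Finset.min'_mem _ h)
  · rw [dif_pos ⟨x, mem_part_self P x⟩]
    exact Finset.min'_mem _ _

lemma wfun_le_of_bmax (P : Finpartition (univ : Finset (Fin m))) {x : Fin m}
    (h : BMax P x) : wfun P x = mu P x := by
  unfold wfun
  rw [dif_neg, dif_pos ⟨x, mem_part_self P x⟩]
  · rfl
  · rintro ⟨y, hy⟩
    rw [Finset.mem_filter] at hy
    exact absurd (h y hy.1) (not_le.mpr hy.2)

lemma lt_wfun_of_not_bmax (P : Finpartition (univ : Finset (Fin m))) {x : Fin m}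
    (h : ¬ BMax P x) : x < wfun P x := by
  unfold BMax at h
  push_neg at h
  obtain ⟨y, hy, hxy⟩ := h
  have hne : ((P.part x).filter fun y => x < y).Nonempty :=
    ⟨y, Finset.mem_filter.mpr ⟨hy, hxy⟩⟩
  unfold wfun
  rw [dif_pos hne]
  exact (Finset.mem_filter.mp (Finset.min'_mem _ hne)).2

lemma wfun_le_of_mem_gt (P : Finpartition (univ : Finset (Fin m))) {x y : Fin m}
    (hy : y ∈ P.part x) (hxy : x < y) : wfun P x ≤ y := by
  have hne : ((P.part x).filter fun y => x < y).Nonempty :=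
    ⟨y, Finset.mem_filter.mpr ⟨hy, hxy⟩⟩
  unfold wfun
  rw [dif_pos hne]
  exact Finset.min'_le _ _ (Finset.mem_filter.mpr ⟨hy, hxy⟩)

lemma bmax_iff (P : Finpartition (univ : Finset (Fin m))) (x : Fin m) :
    BMax P x ↔ wfun P x ≤ x := by
  constructor
  · intro h; rw [wfun_le_of_bmax P h]; exact mu_le P x
  · intro h
    by_contra hb
    exact absurd h (not_le.mpr (lt_wfun_of_not_bmax P hb))

lemma wmin (P : Finpartition (univ : Finset (Fin m))) (y : Fin m) :
    BMin P (wfun P y) ↔ wfun P y ≤ y := by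
  constructor
  · intro h
    apply h
    rw [part_eq_part P (wfun_mem P y)]
    exact mem_part_self P y
  · intro h
    have hb : BMax P y := (bmax_iff P y).2 h
    rw [wfun_le_of_bmax P hb]
    exact bmin_mu P y

lemma wfun_inj (P : Finpartition (univ : Finset (Fin m))) :
    Function.Injective (wfun P) := by
  have aux : ∀ x y : Fin m, x < y → wfun P x = wfun P y → False := by
    intro x y hxy h
    have hpart : P.part x = P.part y := by
      have h1 := wfun_mem P x
      have h2 := wfun_mem P y
      rw [h] at h1
      exact (part_eq_part P h1).symm.trans (part_eq_part P h2)
    have hymem : y ∈ P.part x := by rw [hpart]; exact mem_part_self P y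
    by_cases hbx : BMax P x
    · exact absurd (hbx y hymem) (not_le.mpr hxy)
    · have h1 : x < wfun P x := lt_wfun_of_not_bmax P hbx
      have h2 : wfun P x ≤ y := wfun_le_of_mem_gt P hymem hxy
      by_cases hby : BMax P y
      · have : wfun P y = mu P y := wfun_le_of_bmax P hby
        have hx : x ∈ P.part y := by rw [← hpart]; exact mem_part_self P x
        have : wfun P y ≤ x := this ▸ mu_le_of_mem P hx
        rw [← h] at this
        exact absurd this (not_le.mpr h1)
      · have : y < wfun P y := lt_wfun_of_not_bmax P hby
        rw [← h] at this
        exact absurd h2 (not_le.mpr this)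
  intro x y h
  rcases lt_trichotomy x y with hl | he | hg
  · exact absurd (aux x y hl h) (not_false)
  · exact he
  · exact absurd (aux y x hg h.symm) (not_false)

lemma wfun_surj (P : Finpartition (univ : Finset (Fin m))) :
    Function.Surjective (wfun P) :=
  Finite.injective_iff_surjective.1 (wfun_inj P)

end NCaux

namespace NCaux

variable {n : ℕ}

/-- Lemma A : for `i ≠ 0`, `i` is a block-min of `P` iff `i-1` is not a block-max of `P'`. -/
lemma lemA (P P' : Finpartition (univ : Finset (Fin (n+1))))
    (hK : ∀ x, wfun P (wfun P' x) = finRotate (n + 1) x)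
    (i : Fin (n+1)) (hi : i ≠ 0) :
    BMin P i ↔ ¬ BMax P' (i - 1) := by
  set x := i - 1 with hxdef
  have hx : wfun P (wfun P' x) = i := by
    rw [hK, finRotate_succ_apply, hxdef, sub_add_cancel]
  have hvx : (x : ℕ) + 1 = (i : ℕ) := by
    have h0 : (i : ℕ) ≠ 0 := fun h => hi (Fin.ext h)
    rw [hxdef, Fin.coe_sub_one, if_neg hi]
    omega
  have h1 : BMin P i ↔ i ≤ wfun P' x := by
    constructor
    · intro h
      have := (wmin P (wfun P' x)).2
      by_contra hc
      push_neg at hc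
      have h2 : BMin P (wfun P (wfun P' x)) := hx ▸ h
      have := (wmin P (wfun P' x)).1 h2
      rw [hx] at this
      exact absurd this (not_le.mpr hc)
    · intro h
      have h2 : wfun P (wfun P' x) ≤ wfun P' x := by rw [hx]; exact h
      have := (wmin P (wfun P' x)).2 h2
      rwa [hx] at this
  rw [h1, bmax_iff]
  rw [Fin.le_def, Fin.le_def, not_le]
  omega

/-- Lemma B : `i` is a block-min of `P'` iff `i` is not a block-max of `P`, or the
block of `i` in `P` contains `0`. -/
lemma lemB (P P' : Finpartition (univ : Finset (Fin (n+1))))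
    (hK : ∀ x, wfun P (wfun P' x) = finRotate (n + 1) x)
    (i : Fin (n+1)) :
    BMin P' i ↔ (¬ BMax P i ∨ mu P i = 0) := by
  obtain ⟨y, hy⟩ := wfun_surj P' i
  have h1 : wfun P i = y + 1 := by
    have := hK y
    rw [hy, finRotate_succ_apply] at this
    exact this
  have hmin : BMin P' i ↔ i ≤ y := by rw [← hy, wmin P', hy]
  by_cases hlast : y = Fin.last n
  · have hwi : wfun P i = 0 := by rw [h1, hlast]; simp
    have hbmax : BMax P i := (bmax_iff P i).2 (hwi ▸ Fin.zero_le i)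
    have hmu : mu P i = 0 := by rw [← wfun_le_of_bmax P hbmax, hwi]
    simp only [hmin, hlast]
    exact ⟨fun _ => Or.inr hmu, fun _ => Fin.le_last i⟩
  · have hval : ((y + 1 : Fin (n+1)) : ℕ) = (y : ℕ) + 1 :=
      Fin.val_add_one_of_lt (lt_of_le_of_ne (Fin.le_last y) hlast)
    have hw : (wfun P i : ℕ) = (y : ℕ) + 1 := by rw [h1, hval]
    have hiff : i ≤ y ↔ ¬ BMax P i := by
      rw [bmax_iff, Fin.le_def, Fin.le_def, not_le]
      omega
    rw [hmin, hiff]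
    constructor
    · exact Or.inl
    · rintro (h | h)
      · exact h
      · intro hb
        have := wfun_le_of_bmax P hb
        rw [h1, h] at this
        have : ((y+1 : Fin (n+1)) : ℕ) = 0 := by rw [this]; rfl
        omega

/-- C2: in a noncrossing partition, if `y < i` and the block of `y` reaches `≥ i`,
then `mu y ≤ mu i`. -/
lemma C2 {S : Finpartition (univ : Finset (Fin (n+1)))} (hS : Noncrossing S)
    {y i d : Fin (n+1)} (hyi : y < i) (hd : d ∈ S.part y) (hid : i ≤ d) :
    mu S y ≤ mu S i := by
  by_cases hsame : S.part y = S.part i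
  · exact le_of_eq (mu_congr S hsame)
  · by_contra h
    push_neg at h
    have hba : mu S i < mu S y := h
    have hbc : mu S y < i := lt_of_le_of_lt (mu_le S y) hyi
    have hcd : i < d := by
      rcases lt_or_eq_of_le hid with h' | h'
      · exact h'
      · exact absurd (part_eq_part S (h' ▸ hd)).symm hsame
    have h3 : i ∈ S.part (mu S i) := by rw [part_mu]; exact mem_part_self S i
    have h4 : d ∈ S.part (mu S y) := by rw [part_mu]; exact hd
    have hb := hS (mu S i) (mu S y) i d hba hbc hcd h3 h4
    apply hsame
    have e1 : S.part (mu S y) = S.part (mu S i) := part_eq_part S hb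
    calc S.part y = S.part (mu S y) := (part_mu S y).symm
      _ = S.part (mu S i) := e1
      _ = S.part i := part_mu S i

/-- One-sided reconstruction of the minimum at a non-min position. -/
lemma Cle {R S : Finpartition (univ : Finset (Fin (n+1)))} (hS : Noncrossing S)
    {i : Fin (n+1)}
    (hμ : ∀ y, y < i → mu R y = mu S y)
    (hc : ∀ y, y < i → (R.part y).card = (S.part y).card)
    (hmin : ¬ BMin R i) :
    mu R i ≤ mu S i := by
  set y := mu R i with hydef
  have hy_lt : y < i :=
    lt_of_le_of_ne (mu_le R i) (fun h => hmin ((bmin_iff_mu R i).2 h))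
  have hfil : (R.part y).filter (· < i) = (S.part y).filter (· < i) := by
    ext z
    simp only [Finset.mem_filter]
    constructor
    · rintro ⟨hz, hzi⟩
      refine ⟨?_, hzi⟩
      rw [mem_iff_mu] at hz ⊢
      rw [← hμ z hzi, ← hμ y hy_lt]; exact hz
    · rintro ⟨hz, hzi⟩
      refine ⟨?_, hzi⟩
      rw [mem_iff_mu] at hz ⊢
      rw [hμ z hzi, hμ y hy_lt]; exact hz
  have hcards : ((S.part y).filter (· < i)).card < (S.part y).card := by
    rw [← hfil, ← hc y hy_lt]
    apply Finset.card_lt_card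
    rw [Finset.filter_ssubset]
    refine ⟨i, ?_, by simp⟩
    rw [hydef, part_mu]
    exact mem_part_self R i
  obtain ⟨d, hd, hdi⟩ : ∃ d ∈ S.part y, i ≤ d := by
    by_contra hcon
    push_neg at hcon
    have : (S.part y).filter (· < i) = S.part y :=
      Finset.filter_eq_self.2 fun z hz => hcon z hz
    rw [this] at hcards
    exact lt_irrefl _ hcards
  have hkey := C2 hS hy_lt hd hdi
  calc mu R i = mu R y := (mu_mu R i).symm
    _ = mu S y := hμ y hy_lt
    _ ≤ mu S i := hkey

end NCaux

namespace NCaux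

/-- Extract pointwise equality from equality of filtered-mapped lists, given the
predicates agree on earlier elements. -/
lemma listKey {α β : Type*} {r : α → α → Prop} (f g : α → β) (p q : α → Bool) (i : α) :
    ∀ L : List α, List.Pairwise r L → i ∈ L → p i = true → q i = true →
      (∀ y ∈ L, r y i → p y = q y) →
      (L.filter p).map f = (L.filter q).map g → f i = g i := by
  intro L
  induction L with
  | nil => intro _ h; exact absurd h List.not_mem_nil
  | cons a T ih =>
    intro hpw hmem hpi hqi hag heq
    rw [List.pairwise_cons] at hpw
    rcases List.mem_cons.mp hmem with h | h
    · subst h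
      rw [List.filter_cons_of_pos hpi, List.filter_cons_of_pos hqi,
        List.map_cons, List.map_cons] at heq
      exact (List.cons_eq_cons.mp heq).1
    · have hai : r a i := hpw.1 i h
      have hpa : p a = q a := hag a List.mem_cons_self hai
      by_cases hpa' : p a = true
      · have hqa' : q a = true := hpa ▸ hpa'
        rw [List.filter_cons_of_pos hpa', List.filter_cons_of_pos hqa',
          List.map_cons, List.map_cons] at heq
        exact ih hpw.2 h hpi hqi (fun y hy hr => hag y (List.mem_cons_of_mem a hy) hr)
          (List.cons_eq_cons.mp heq).2
      · have hqa' : ¬ q a = true := fun hq => hpa' (hpa ▸ hq)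
        rw [List.filter_cons_of_neg (by simpa using hpa'),
          List.filter_cons_of_neg (by simpa using hqa')] at heq
        exact ih hpw.2 h hpi hqi (fun y hy hr => hag y (List.mem_cons_of_mem a hy) hr) heq

variable {n : ℕ}

lemma bmax_iff_card (R : Finpartition (univ : Finset (Fin (n+1)))) (x : Fin (n+1)) :
    BMax R x ↔ ((R.part x).filter (· ≤ x)).card = (R.part x).card := by
  constructor
  · intro h
    congr 1
    exact Finset.filter_eq_self.2 h
  · intro h
    have := Finset.eq_of_subset_of_card_le (Finset.filter_subset (· ≤ x) (R.part x)) (le_of_eq h.symm)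
    intro j hj
    have : j ∈ (R.part x).filter (· ≤ x) := by rw [this]; exact hj
    exact (Finset.mem_filter.mp this).2

/-- BMax transfers along agreement of `mu` and cardinalities up to `x`. -/
lemma bmax_transfer {R S : Finpartition (univ : Finset (Fin (n+1)))} {x : Fin (n+1)}
    (hμ : ∀ y, y ≤ x → mu R y = mu S y)
    (hc : (R.part x).card = (S.part x).card) :
    BMax R x ↔ BMax S x := by
  have hfil : (R.part x).filter (· ≤ x) = (S.part x).filter (· ≤ x) := by
    ext z
    simp only [Finset.mem_filter]
    constructor
    · rintro ⟨hz, hzx⟩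
      refine ⟨?_, hzx⟩
      rw [mem_iff_mu] at hz ⊢
      rw [← hμ z hzx, ← hμ x le_rfl]; exact hz
    · rintro ⟨hz, hzx⟩
      refine ⟨?_, hzx⟩
      rw [mem_iff_mu] at hz ⊢
      rw [hμ z hzx, hμ x le_rfl]; exact hz
  rw [bmax_iff_card, bmax_iff_card, hfil, hc]

end NCaux


open NCaux

/-- the map sending a noncrossing partition `π` of `[n+1]` to the
pair `(t(π), t(K(π)))` of ordered types of `π` and of its right Kreweras
complement `K(π)` (characterized by `w_π ∘ w_{K(π)} = (1 2 … n+1)`) is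
injective. -/
theorem statement8 (n : ℕ) (P Q P' Q' : Finpartition (univ : Finset (Fin (n + 1))))
    (hP : Noncrossing P) (hQ : Noncrossing Q)
    (hP' : Noncrossing P') (hQ' : Noncrossing Q')
    (hKP : ∀ x, wfun P (wfun P' x) = finRotate (n + 1) x)
    (hKQ : ∀ x, wfun Q (wfun Q' x) = finRotate (n + 1) x)
    (h1 : orderedType P = orderedType Q)
    (h2 : orderedType P' = orderedType Q') :
    P = Q := by
  unfold orderedType at h1 h2
  have key : ∀ k : ℕ, ∀ i : Fin (n+1), (i : ℕ) = k →
      (mu P i = mu Q i ∧ (P.part i).card = (Q.part i).card) ∧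
      (mu P' i = mu Q' i ∧ (P'.part i).card = (Q'.part i).card) := by
    intro k
    induction k using Nat.strong_induction_on with
    | _ k ih =>
    intro i hik
    have below : ∀ j : Fin (n+1), j < i →
        (mu P j = mu Q j ∧ (P.part j).card = (Q.part j).card) ∧
        (mu P' j = mu Q' j ∧ (P'.part j).card = (Q'.part j).card) := by
      intro j hj
      exact ih (j : ℕ) (by rw [← hik]; exact hj) j rfl
    have hμP : ∀ y, y < i → mu P y = mu Q y := fun y hy => ((below y hy).1).1
    have hcP : ∀ y, y < i → (P.part y).card = (Q.part y).card := fun y hy => ((below y hy).1).2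
    have hμP' : ∀ y, y < i → mu P' y = mu Q' y := fun y hy => ((below y hy).2).1
    have hcP' : ∀ y, y < i → (P'.part y).card = (Q'.part y).card := fun y hy => ((below y hy).2).2
    -- Step 1: min-iff for the P side
    have hminiff : BMin P i ↔ BMin Q i := by
      by_cases hi0 : i = 0
      · subst hi0
        constructor <;> intro _ <;> (intro j _; exact Fin.zero_le j)
      · rw [lemA P P' hKP i hi0, lemA Q Q' hKQ i hi0]
        have hx : i - 1 < i := by
          rw [Fin.lt_def, Fin.coe_sub_one, if_neg hi0]
          have : (i : ℕ) ≠ 0 := fun h => hi0 (Fin.ext h)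
          omega
        apply not_congr
        apply bmax_transfer
        · intro y hy; exact hμP' y (lt_of_le_of_lt hy hx)
        · exact hcP' _ hx
    have hagP : ∀ y : Fin (n+1), y < i →
        (decide (∀ j ∈ P.part y, y ≤ j) = decide (∀ j ∈ Q.part y, y ≤ j)) := by
      intro y hy
      apply decide_eq_decide.mpr
      have e1 : (∀ j ∈ P.part y, y ≤ j) ↔ mu P y = y := bmin_iff_mu P y
      have e2 : (∀ j ∈ Q.part y, y ≤ j) ↔ mu Q y = y := bmin_iff_mu Q y
      rw [e1, e2, hμP y hy]
    -- Part 1 : the P-side data at i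
    have part1 : mu P i = mu Q i ∧ (P.part i).card = (Q.part i).card := by
      by_cases hmin : BMin P i
      · have hminQ := hminiff.1 hmin
        have hμi : mu P i = i := (bmin_iff_mu P i).1 hmin
        have hμiQ : mu Q i = i := (bmin_iff_mu Q i).1 hminQ
        refine ⟨hμi.trans hμiQ.symm, ?_⟩
        exact listKey (r := (· < ·)) (fun y => (P.part y).card) (fun y => (Q.part y).card)
          (fun y => decide (∀ j ∈ P.part y, y ≤ j)) (fun y => decide (∀ j ∈ Q.part y, y ≤ j)) i
          (List.finRange (n+1)) (List.pairwise_lt_finRange (n+1)) (List.mem_finRange i)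
          (decide_eq_true hmin) (decide_eq_true hminQ)
          (fun y _ hr => hagP y hr) h1
      · have hminQ : ¬ BMin Q i := fun h => hmin (hminiff.2 h)
        have hμeq : mu P i = mu Q i := le_antisymm (Cle hQ hμP hcP hmin)
          (Cle hP (fun y hy => (hμP y hy).symm) (fun y hy => (hcP y hy).symm) hminQ)
        refine ⟨hμeq, ?_⟩
        have hlt : mu P i < i :=
          lt_of_le_of_ne (mu_le P i) (fun h => hmin ((bmin_iff_mu P i).2 h))
        calc (P.part i).card = (P.part (mu P i)).card := by rw [part_mu]
          _ = (Q.part (mu P i)).card := hcP _ hlt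
          _ = (Q.part (mu Q i)).card := by rw [hμeq]
          _ = (Q.part i).card := by rw [part_mu]
    -- Step 2: min-iff for the P' side
    have hμPle : ∀ y, y ≤ i → mu P y = mu Q y := by
      intro y hy
      rcases lt_or_eq_of_le hy with h | h
      · exact hμP y h
      · subst h; exact part1.1
    have hminiff' : BMin P' i ↔ BMin Q' i := by
      rw [lemB P P' hKP i, lemB Q Q' hKQ i]
      have hbm : BMax P i ↔ BMax Q i := bmax_transfer hμPle part1.2
      rw [hbm, hμPle i le_rfl]
    have hagP' : ∀ y : Fin (n+1), y < i →
        (decide (∀ j ∈ P'.part y, y ≤ j) = decide (∀ j ∈ Q'.part y, y ≤ j)) := by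
      intro y hy
      apply decide_eq_decide.mpr
      have e1 : (∀ j ∈ P'.part y, y ≤ j) ↔ mu P' y = y := bmin_iff_mu P' y
      have e2 : (∀ j ∈ Q'.part y, y ≤ j) ↔ mu Q' y = y := bmin_iff_mu Q' y
      rw [e1, e2, hμP' y hy]
    have part2 : mu P' i = mu Q' i ∧ (P'.part i).card = (Q'.part i).card := by
      by_cases hmin : BMin P' i
      · have hminQ := hminiff'.1 hmin
        have hμi : mu P' i = i := (bmin_iff_mu P' i).1 hmin
        have hμiQ : mu Q' i = i := (bmin_iff_mu Q' i).1 hminQ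
        refine ⟨hμi.trans hμiQ.symm, ?_⟩
        exact listKey (r := (· < ·)) (fun y => (P'.part y).card) (fun y => (Q'.part y).card)
          (fun y => decide (∀ j ∈ P'.part y, y ≤ j)) (fun y => decide (∀ j ∈ Q'.part y, y ≤ j)) i
          (List.finRange (n+1)) (List.pairwise_lt_finRange (n+1)) (List.mem_finRange i)
          (decide_eq_true hmin) (decide_eq_true hminQ)
          (fun y _ hr => hagP' y hr) h2
      · have hminQ : ¬ BMin Q' i := fun h => hmin (hminiff'.2 h)
        have hμeq : mu P' i = mu Q' i := le_antisymm (Cle hQ' hμP' hcP' hmin)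
          (Cle hP' (fun y hy => (hμP' y hy).symm) (fun y hy => (hcP' y hy).symm) hminQ)
        refine ⟨hμeq, ?_⟩
        have hlt : mu P' i < i :=
          lt_of_le_of_ne (mu_le P' i) (fun h => hmin ((bmin_iff_mu P' i).2 h))
        calc (P'.part i).card = (P'.part (mu P' i)).card := by rw [part_mu]
          _ = (Q'.part (mu P' i)).card := hcP' _ hlt
          _ = (Q'.part (mu Q' i)).card := by rw [hμeq]
          _ = (Q'.part i).card := by rw [part_mu]
    exact ⟨part1, part2⟩
  have keyall : ∀ i : Fin (n+1), mu P i = mu Q i := fun i => ((key (i : ℕ) i rfl).1).1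
  have hparts : ∀ x, P.part x = Q.part x := by
    intro x
    ext z
    rw [mem_iff_mu, mem_iff_mu, keyall z, keyall x]
  apply Finpartition.ext
  ext b
  constructor
  · intro hb
    obtain ⟨x, hx⟩ := P.nonempty_of_mem_parts hb
    have hbx : P.part x = b := P.part_eq_of_mem hb hx
    rw [← hbx, hparts]
    exact Q.part_mem.2 (mem_univ x)
  · intro hb
    obtain ⟨x, hx⟩ := Q.nonempty_of_mem_parts hb
    have hbx : Q.part x = b := Q.part_eq_of_mem hb hx
    rw [← hbx, ← hparts]
    exact P.part_mem.2 (mem_univ x)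
end

section
/- The number of weakly increasing words s_1 ≤ s_2 ≤ ... ≤ s_n with i ≤ s_i ≤ n for all i, in which no value occurs more than twice and exactly k values occur twice, equals binom(n, 2k) · C_k, where C_k is the k-th Catalan number. -/
def toS : ℕ → List ℕ → List ℕ
  | _, [] => []
  | v, c :: m => List.replicate c v ++ toS (v+1) m

lemma toS_length (v : ℕ) (m : List ℕ) : (toS v m).length = m.sum := by
  induction m generalizing v with
  | nil => simp [toS]
  | cons c m ih => simp [toS, ih]

lemma toS_mem (v : ℕ) (m : List ℕ) : ∀ x ∈ toS v m, v ≤ x ∧ x < v + m.length := by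
  induction m generalizing v with
  | nil => simp [toS]
  | cons c m ih =>
    intro x hx
    simp only [toS, List.mem_append, List.mem_replicate] at hx
    rcases hx with ⟨-, rfl⟩ | hx
    · simp only [List.length_cons]; omega
    · have := ih (v+1) x hx
      simp only [List.length_cons]
      omega

lemma toS_sorted (v : ℕ) (m : List ℕ) : (toS v m).Pairwise (· ≤ ·) := by
  induction m generalizing v with
  | nil => simp [toS]
  | cons c m ih =>
    rw [toS, List.pairwise_append]
    refine ⟨List.pairwise_replicate.2 (Or.inr le_rfl), ih (v+1), ?_⟩
    intro a ha b hb
    rw [List.mem_replicate] at ha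
    have := toS_mem (v+1) m b hb
    omega

lemma toS_count (v w : ℕ) (m : List ℕ) :
    (toS v m).count w = if v ≤ w ∧ w < v + m.length then m.getD (w - v) 0 else 0 := by
  induction m generalizing v with
  | nil => simp [toS]
  | cons c m ih =>
    rw [toS, List.count_append, List.count_replicate, ih (v+1)]
    by_cases hw : w = v
    · subst hw
      simp only [List.length_cons, beq_self_eq_true, if_true]
      rw [if_neg (by omega), if_pos (by omega)]
      simp
    · rw [if_neg (by simp [Ne.symm hw])]
      simp only [List.length_cons]
      by_cases h1 : v + 1 ≤ w ∧ w < v + 1 + m.length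
      · rw [if_pos h1, if_pos (by omega)]
        have : w - v = (w - (v+1)) + 1 := by omega
        rw [this]
        simp
      · rw [if_neg h1, if_neg (by omega)]

lemma toS_countP_le (v w : ℕ) (m : List ℕ) :
    (toS v m).countP (fun x => x ≤ w) = (m.take (w + 1 - v)).sum := by
  induction m generalizing v with
  | nil => simp [toS]
  | cons c m ih =>
    rw [toS, List.countP_append, ih (v+1)]
    have hrep : (List.replicate c v).countP (fun x => x ≤ w) = if v ≤ w then c else 0 := by
      by_cases h : v ≤ w
      · rw [if_pos h, List.countP_eq_length.2]
        · simp
        · intro a ha; rw [List.mem_replicate] at ha; simpa [ha.2]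
      · rw [if_neg h, List.countP_eq_zero.2]
        intro a ha; rw [List.mem_replicate] at ha; simp [ha.2]; omega
    rw [hrep]
    by_cases h : v ≤ w
    · rw [if_pos h, show w + 1 - v = (w + 1 - (v+1)) + 1 from by omega]
      simp
    · rw [if_neg h, show w + 1 - v = 0 from by omega, show w + 1 - (v+1) = 0 from by omega]
      simp

lemma countP_le_succ (s : List ℕ) (v : ℕ) :
    s.countP (fun x => x ≤ v + 1) = s.countP (fun x => x ≤ v) + s.count (v+1) := by
  induction s with
  | nil => simp
  | cons a s ih =>
    rw [List.count_cons, List.countP_cons, List.countP_cons, ih]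
    by_cases h1 : a = v + 1
    · simp [h1]; omega
    · by_cases h2 : a ≤ v
      · simp [h1, h2, Nat.le_succ_of_le h2]; omega
      · have : ¬ a ≤ v + 1 := by omega
        simp [h1, h2, this]

lemma sorted_ge_iff (s : List ℕ) (hs : s.Pairwise (· ≤ ·)) :
    (∀ i (h : i < s.length), i + 1 ≤ s.get ⟨i, h⟩) ↔
      ∀ v, s.countP (fun x => x ≤ v) ≤ v := by
  constructor
  · intro H v
    by_cases hv : v < s.length
    · have hget : v + 1 ≤ s.get ⟨v, hv⟩ := H v hv
      have hsplit : s.countP (fun x => x ≤ v)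
          = (s.take v).countP (fun x => x ≤ v) + (s.drop v).countP (fun x => x ≤ v) := by
        rw [← List.countP_append, List.take_append_drop]
      have hdrop : (s.drop v).countP (fun x => x ≤ v) = 0 := by
        rw [List.countP_eq_zero]
        intro a ha
        rw [List.mem_iff_getElem] at ha
        obtain ⟨j, hj, rfl⟩ := ha
        rw [List.getElem_drop]
        have hj' : j < s.length - v := by simpa using hj
        have hlt : v + j < s.length := by omega
        have hmono : s.get ⟨v, hv⟩ ≤ s.get ⟨v + j, hlt⟩ :=
          hs.rel_get_of_le (by simp)
        simp only [List.get_eq_getElem] at hmono hget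
        simp only [decide_eq_true_eq]
        omega
      have htake : (s.take v).countP (fun x => x ≤ v) ≤ v := by
        calc (s.take v).countP _ ≤ (s.take v).length := List.countP_le_length
        _ ≤ v := by simp
      omega
    · calc s.countP _ ≤ s.length := List.countP_le_length
      _ ≤ v := by omega
  · intro C i h
    set v := s.get ⟨i, h⟩ with hv
    by_contra hcon
    push_neg at hcon
    have hall : ∀ a ∈ s.take (i+1), a ≤ v := by
      intro a ha
      rw [List.mem_iff_getElem] at ha
      obtain ⟨j, hj, rfl⟩ := ha
      rw [List.getElem_take]
      have hji : j ≤ i := by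
        have := hj; rw [List.length_take] at this; omega
      exact hs.rel_get_of_le (a := ⟨j, by omega⟩) (b := ⟨i, h⟩) (by simpa using hji)
    have h1 : (s.take (i+1)).countP (fun x => x ≤ v) = (s.take (i+1)).length :=
      List.countP_eq_length.2 (fun a ha => by simpa using hall a ha)
    have h2 : (s.take (i+1)).length = i + 1 := by simp; omega
    have h3 : (s.take (i+1)).countP (fun x => x ≤ v) ≤ s.countP (fun x => x ≤ v) :=
      (List.take_sublist _ _).countP_le
    have := C v
    omega

def bal (j k : ℕ) : ℕ := (2*k+j).choose (k+j) - (2*k+j).choose (k+j+1)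

lemma bdec (m t : ℕ) (h : m ≤ 2*t+1) : m.choose (t+1) ≤ m.choose t := by
  have h1 := Nat.choose_succ_right_eq m t
  have h2 : m - t ≤ t + 1 := by omega
  nlinarith [Nat.mul_le_mul_left (m.choose t) h2]

lemma bid1 (j k : ℕ) : bal (j+1) (k+1) = bal j (k+1) + bal (j+2) k := by
  unfold bal
  rw [show 2*(k+1)+(j+1) = 2*k+j+3 from by omega, show (k+1)+(j+1) = k+j+2 from by omega,
    show k+j+2+1 = k+j+3 from rfl, show 2*(k+1)+j = 2*k+j+2 from by omega,
    show (k+1)+j = k+j+1 from by omega, show k+j+1+1 = k+j+2 from rfl,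
    show 2*k+(j+2) = 2*k+j+2 from by omega, show k+(j+2) = k+j+2 from rfl,
    show k+j+2+1 = k+j+3 from rfl]
  have p1 : (2*k+j+3).choose (k+j+2) = (2*k+j+2).choose (k+j+1) + (2*k+j+2).choose (k+j+2) := by
    have := Nat.choose_succ_succ (2*k+j+2) (k+j+1); convert this using 2 <;> omega
  have p2 : (2*k+j+3).choose (k+j+3) = (2*k+j+2).choose (k+j+2) + (2*k+j+2).choose (k+j+3) := by
    have := Nat.choose_succ_succ (2*k+j+2) (k+j+2); convert this using 2 <;> omega
  have i1 : (2*k+j+2).choose (k+j+2) ≤ (2*k+j+2).choose (k+j+1) := bdec _ _ (by omega)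
  have i2 : (2*k+j+2).choose (k+j+3) ≤ (2*k+j+2).choose (k+j+2) := bdec _ _ (by omega)
  omega

lemma bid2 (k : ℕ) : bal 0 (k+1) = bal 1 k := by
  unfold bal
  rw [show 2*(k+1)+0 = 2*k+2 from by omega, show (k+1)+0 = k+1 from rfl,
    show k+1+1 = k+2 from rfl, show 2*k+1 = 2*k+1 from rfl, show k+1+1 = k+2 from rfl]
  have p1 : (2*k+2).choose (k+1) = (2*k+1).choose k + (2*k+1).choose (k+1) := by
    have := Nat.choose_succ_succ (2*k+1) k; convert this using 2 <;> omega
  have p2 : (2*k+2).choose (k+2) = (2*k+1).choose (k+1) + (2*k+1).choose (k+2) := by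
    have := Nat.choose_succ_succ (2*k+1) (k+1); convert this using 2 <;> omega
  have sym : (2*k+1).choose k = (2*k+1).choose (k+1) := by
    have := Nat.choose_symm (n := 2*k+1) (k := k) (by omega)
    rw [show 2*k+1-k = k+1 from by omega] at this
    omega
  have i2 : (2*k+1).choose (k+2) ≤ (2*k+1).choose (k+1) := bdec _ _ (by omega)
  omega

lemma bal_zero (j : ℕ) : bal j 0 = 1 := by
  unfold bal
  rw [show 2*0+j = j from by omega]
  simp [Nat.choose_self, Nat.choose_succ_self]

lemma catalan_eq_bal (k : ℕ) : catalan k = bal 0 k := by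
  have h1 : (k+1) * catalan k = (2*k).choose k := by
    rw [succ_mul_catalan_eq_centralBinom, Nat.centralBinom]
  have h2 : (2*k).choose (k+1) * (k+1) = (2*k).choose k * k := by
    have := Nat.choose_succ_right_eq (2*k) k
    rwa [show 2*k-k = k from by omega] at this
  have h3 : (k+1) * bal 0 k = (2*k).choose k := by
    unfold bal
    have i : (2*k).choose (k+1) ≤ (2*k).choose k := bdec _ _ (by omega)
    rw [show 2*k+0 = 2*k from by omega, show k+0 = k from rfl]
    zify [i]
    push_cast at h2
    linarith
  exact Nat.eq_of_mul_eq_mul_left (Nat.succ_pos k) (by rw [h1, h3])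

def Pm (n j k : ℕ) (m : List ℕ) : Prop :=
  m.length = n ∧ (∀ x ∈ m, x ≤ 2) ∧ m.sum + j = n ∧
    (∀ v, (m.take v).sum ≤ v) ∧ m.count 2 = k

instance finPm (n j k : ℕ) : Finite {m : List ℕ // Pm n j k m} := by
  have key : ∀ (m : {m : List ℕ // Pm n j k m}) (i : Fin n), m.1.getD i 0 < 3 := by
    rintro ⟨m, hlen, hb, -⟩ i
    have hi : (i : ℕ) < m.length := by rw [hlen]; exact i.2
    rw [List.getD_eq_getElem _ _ hi]
    exact Nat.lt_succ_of_le (hb _ (List.getElem_mem hi))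
  apply Finite.of_injective (fun m => fun i : Fin n => (⟨m.1.getD i 0, key m i⟩ : Fin 3))
  rintro ⟨m, hm⟩ ⟨m', hm'⟩ h
  have hl : m.length = m'.length := by rw [hm.1, hm'.1]
  apply Subtype.ext
  apply List.ext_getElem hl
  intro i h1 h2
  have hi : i < n := by rw [← hm.1]; exact h1
  have h3 : m.getD i 0 = m'.getD i 0 := congrArg Fin.val (congrFun h ⟨i, hi⟩)
  rwa [List.getD_eq_getElem _ _ h1, List.getD_eq_getElem _ _ h2] at h3

noncomputable def Am (n j k : ℕ) : ℕ := Nat.card {m : List ℕ // Pm n j k m}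

lemma Am_zero (j k : ℕ) : Am 0 j k = if j = 0 ∧ k = 0 then 1 else 0 := by
  by_cases h : j = 0 ∧ k = 0
  · obtain ⟨rfl, rfl⟩ := h
    rw [if_pos ⟨rfl, rfl⟩, Am, Nat.card_eq_one_iff_unique]
    constructor
    · constructor
      rintro ⟨m, hm⟩ ⟨m', hm'⟩
      have : m = [] := List.eq_nil_of_length_eq_zero hm.1
      have : m' = [] := List.eq_nil_of_length_eq_zero hm'.1
      subst_vars; rfl
    · exact ⟨⟨[], by simp [Pm]⟩⟩
  · rw [if_neg h]
    have : IsEmpty {m : List ℕ // Pm 0 j k m} := by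
      constructor
      rintro ⟨m, h1, h2, h3, h4, h5⟩
      have : m = [] := List.eq_nil_of_length_eq_zero h1
      subst this
      simp at h3 h5
      exact h ⟨by omega, by omega⟩
    simp [Am]

lemma prefix_of_append {m : List ℕ} {x : ℕ}
    (h : ∀ v, ((m ++ [x]).take v).sum ≤ v) : ∀ v, (m.take v).sum ≤ v := by
  intro v
  refine le_trans ?_ (h v)
  rw [List.take_append, List.sum_append]
  exact Nat.le_add_right _ _

lemma Pa_gen (n j k x : ℕ) (m : List ℕ) (hx : x ≤ 2) :
    Pm (n+1) j k (m ++ [x]) ↔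
      (m.length = n ∧ (∀ y ∈ m, y ≤ 2) ∧ m.sum + x + j = n + 1 ∧
        (∀ v, (m.take v).sum ≤ v) ∧ m.count 2 + (if x = 2 then 1 else 0) = k) := by
  constructor
  · rintro ⟨h1, h2, h3, h4, h5⟩
    simp only [List.length_append, List.length_cons, List.length_nil] at h1
    rw [List.sum_append] at h3
    rw [List.count_append] at h5
    refine ⟨by omega, fun y hy => h2 y (List.mem_append_left _ hy), by simp at h3; omega,
      prefix_of_append h4, ?_⟩
    rw [← h5]
    congr 1
    by_cases h : x = 2
    · simp [h]
    · rw [if_neg h]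
      exact (List.count_eq_zero.2 (by simp only [List.mem_singleton]; omega)).symm
  · rintro ⟨h1, h2, h3, h4, h5⟩
    refine ⟨by simp [h1], ?_, by simp; omega, ?_, ?_⟩
    · intro y hy
      rcases List.mem_append.1 hy with h | h
      · exact h2 y h
      · simp at h; omega
    · intro v
      by_cases hv : v ≤ m.length
      · rw [List.take_append_of_le_length hv]; exact h4 v
      · rw [List.take_of_length_le (by simp; omega)]
        rw [List.sum_append]
        simp
        omega
    · rw [List.count_append, ← h5]
      congr 1
      by_cases h : x = 2
      · simp [h]
      · rw [if_neg h]
        exact List.count_eq_zero.2 (by simp only [List.mem_singleton]; omega)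

lemma Pa0 (n j k : ℕ) (m : List ℕ) :
    Pm (n+1) j k (m ++ [0]) ↔ (Pm n (j-1) k m ∧ 1 ≤ j) := by
  rw [Pa_gen n j k 0 m (by omega)]
  unfold Pm
  constructor
  · rintro ⟨h1, h2, h3, h4, h5⟩
    have hj : 1 ≤ j := by
      have := h4 n
      rw [List.take_of_length_le (by omega)] at this
      omega
    exact ⟨⟨h1, h2, by omega, h4, by simpa using h5⟩, hj⟩
  · rintro ⟨⟨h1, h2, h3, h4, h5⟩, hj⟩
    exact ⟨h1, h2, by omega, h4, by simpa using h5⟩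

lemma Pa1 (n j k : ℕ) (m : List ℕ) :
    Pm (n+1) j k (m ++ [1]) ↔ Pm n j k m := by
  rw [Pa_gen n j k 1 m (by omega)]
  unfold Pm
  constructor
  · rintro ⟨h1, h2, h3, h4, h5⟩
    exact ⟨h1, h2, by omega, h4, by simpa using h5⟩
  · rintro ⟨h1, h2, h3, h4, h5⟩
    exact ⟨h1, h2, by omega, h4, by simpa using h5⟩

lemma Pa2 (n j k : ℕ) (m : List ℕ) :
    Pm (n+1) j k (m ++ [2]) ↔ (Pm n (j+1) (k-1) m ∧ 1 ≤ k) := by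
  rw [Pa_gen n j k 2 m (by omega)]
  unfold Pm
  constructor
  · rintro ⟨h1, h2, h3, h4, h5⟩
    rw [if_pos rfl] at h5
    exact ⟨⟨h1, h2, by omega, h4, by omega⟩, by omega⟩
  · rintro ⟨⟨h1, h2, h3, h4, h5⟩, hk⟩
    rw [if_pos rfl]
    exact ⟨h1, h2, by omega, h4, by omega⟩

lemma finite_and {Q : List ℕ → Prop} (c : Prop) (h : Finite {m : List ℕ // Q m}) :
    Finite {m : List ℕ // Q m ∧ c} :=
  Finite.of_injective (fun a => (⟨a.1, a.2.1⟩ : {m // Q m}))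
    (fun a b hab => Subtype.ext (by simpa using congrArg Subtype.val hab))

lemma card_and {Q : List ℕ → Prop} (c : Prop) [Decidable c] :
    Nat.card {m : List ℕ // Q m ∧ c} = if c then Nat.card {m : List ℕ // Q m} else 0 := by
  by_cases hc : c
  · rw [if_pos hc]
    exact Nat.card_congr (Equiv.subtypeEquivRight fun m => and_iff_left hc)
  · rw [if_neg hc]
    have : IsEmpty {m : List ℕ // Q m ∧ c} := ⟨fun a => hc a.2.2⟩
    simp

def fpeel (n j k : ℕ) :
    ({m : List ℕ // Pm n (j-1) k m ∧ 1 ≤ j} ⊕ {m : List ℕ // Pm n j k m} ⊕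
      {m : List ℕ // Pm n (j+1) (k-1) m ∧ 1 ≤ k}) → {m : List ℕ // Pm (n+1) j k m}
  | .inl ⟨m, h⟩ => ⟨m ++ [0], (Pa0 n j k m).2 h⟩
  | .inr (.inl ⟨m, h⟩) => ⟨m ++ [1], (Pa1 n j k m).2 h⟩
  | .inr (.inr ⟨m, h⟩) => ⟨m ++ [2], (Pa2 n j k m).2 h⟩

lemma fpeel_bij (n j k : ℕ) : Function.Bijective (fpeel n j k) := by
  constructor
  · rintro (⟨m,hm⟩|⟨m,hm⟩|⟨m,hm⟩) (⟨m',hm'⟩|⟨m',hm'⟩|⟨m',hm'⟩) h <;>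
      · simp only [fpeel, Subtype.mk.injEq] at h ⊢
        obtain ⟨h1, h2⟩ := List.append_inj' h rfl
        simp_all
  · rintro ⟨m, hm⟩
    have hne : m ≠ [] := by
      intro he; rw [he] at hm; exact absurd hm.1 (by simp)
    have hsplit : m.dropLast ++ [m.getLast hne] = m := List.dropLast_append_getLast hne
    have hx : m.getLast hne ≤ 2 := hm.2.1 _ (List.getLast_mem hne)
    have hm' : Pm (n+1) j k (m.dropLast ++ [m.getLast hne]) := by rw [hsplit]; exact hm
    have h3 : m.getLast hne = 0 ∨ m.getLast hne = 1 ∨ m.getLast hne = 2 := by omega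
    rcases h3 with h3 | h3 | h3 <;> rw [h3] at hm' hsplit
    · exact ⟨.inl ⟨m.dropLast, (Pa0 n j k _).1 hm'⟩, Subtype.ext hsplit⟩
    · exact ⟨.inr (.inl ⟨m.dropLast, (Pa1 n j k _).1 hm'⟩), Subtype.ext hsplit⟩
    · exact ⟨.inr (.inr ⟨m.dropLast, (Pa2 n j k _).1 hm'⟩), Subtype.ext hsplit⟩

lemma peel (n j k : ℕ) : Am (n+1) j k =
    (if 1 ≤ j then Am n (j-1) k else 0) + Am n j k + (if 1 ≤ k then Am n (j+1) (k-1) else 0) := by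
  haveI := finite_and (Q := Pm n (j-1) k) (1 ≤ j) (finPm _ _ _)
  haveI := finite_and (Q := Pm n (j+1) (k-1)) (1 ≤ k) (finPm _ _ _)
  have e := Nat.card_congr (Equiv.ofBijective _ (fpeel_bij n j k))
  rw [Am, ← e, Nat.card_sum, Nat.card_sum, card_and, card_and]
  simp only [Am]
  omega

lemma Am_eq (n : ℕ) : ∀ j k, Am n j k = n.choose (2*k+j) * bal j k := by
  induction n with
  | zero =>
    intro j k
    rw [Am_zero]
    by_cases h : j = 0 ∧ k = 0
    · obtain ⟨rfl, rfl⟩ := h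
      simp [bal_zero]
    · rw [if_neg h]
      have h2 : 2*k+j ≠ 0 := by omega
      rcases Nat.exists_eq_succ_of_ne_zero h2 with ⟨t, ht⟩
      rw [ht, Nat.choose_zero_succ, zero_mul]
  | succ n ih =>
    intro j k
    rw [peel]
    rcases j with _ | j <;> rcases k with _ | k
    · rw [if_neg (by omega), if_neg (by omega), ih 0 0]
      simp [bal_zero]
    · rw [if_neg (by omega), if_pos (by omega)]
      simp only [Nat.add_sub_cancel, Nat.zero_add]
      rw [ih 0 (k+1), ih 1 k,
        show 2*(k+1)+0 = 2*k+2 from by omega, show 2*k+1 = 2*k+1 from rfl, ← bid2 k]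
      have pas : (n+1).choose (2*k+2) = n.choose (2*k+1) + n.choose (2*k+2) :=
        Nat.choose_succ_succ n (2*k+1)
      rw [pas]; ring
    · rw [if_pos (by omega), if_neg (by omega)]
      simp only [Nat.add_sub_cancel]
      rw [ih j 0, ih (j+1) 0, bal_zero, bal_zero,
        show 2*0+j = j from by omega, show 2*0+(j+1) = j+1 from by omega]
      have pas : (n+1).choose (j+1) = n.choose j + n.choose (j+1) :=
        Nat.choose_succ_succ n j
      rw [pas]; ring
    · rw [if_pos (by omega), if_pos (by omega)]
      simp only [Nat.add_sub_cancel]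
      rw [ih j (k+1), ih (j+1) (k+1), ih (j+2) k,
        show 2*(k+1)+j = 2*k+j+2 from by omega,
        show 2*(k+1)+(j+1) = 2*k+j+3 from by omega,
        show 2*k+(j+2) = 2*k+j+2 from by omega,
        bid1 j k]
      have pas : (n+1).choose (2*k+j+3) = n.choose (2*k+j+2) + n.choose (2*k+j+3) :=
        Nat.choose_succ_succ n (2*k+j+2)
      rw [pas]; ring

def Ps (n k : ℕ) (s : List ℕ) : Prop :=
  s.length = n ∧ s.Pairwise (· ≤ ·) ∧
    (∀ i (h : i < s.length), i + 1 ≤ s.get ⟨i, h⟩ ∧ s.get ⟨i, h⟩ ≤ n) ∧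
    (∀ v, s.count v ≤ 2) ∧
    ((Finset.Icc 1 n).filter fun v => s.count v = 2).card = k

lemma cardfilter (p : ℕ → Prop) [DecidablePred p] (n : ℕ) :
    ((Finset.Icc 1 n).filter p).card = (List.range n).countP (fun i => p (i+1)) := by
  induction n with
  | zero => simp
  | succ n ih =>
    rw [List.range_succ, List.countP_append, ← ih,
      ← Finset.insert_Icc_right_eq_Icc_add_one (by omega : 1 ≤ n + 1), Finset.filter_insert]
    by_cases h : p (n+1)
    · rw [if_pos h, Finset.card_insert_of_notMem (by simp)]
      simp [h]
    · rw [if_neg h]; simp [h]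

lemma countP_getD : ∀ m : List ℕ, (List.range m.length).countP (fun i => m.getD i 0 = 2) = m.count 2 := by
  intro m
  induction m with
  | nil => simp
  | cons c m ih =>
    rw [List.length_cons, List.range_succ_eq_map, List.countP_cons, List.countP_map,
      List.count_cons, ← ih]
    have he : List.countP ((fun i => decide ((c :: m).getD i 0 = 2)) ∘ Nat.succ) (List.range m.length)
        = List.countP (fun i => decide (m.getD i 0 = 2)) (List.range m.length) := by
      apply List.countP_congr
      intro x hx
      simp [Function.comp, List.getD_cons_succ]
    rw [he]
    by_cases h : c = 2 <;> simp [h]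

lemma sum_counts (s : List ℕ) (h1 : ∀ x ∈ s, 1 ≤ x) :
    ∀ v, ((List.range v).map (fun i => s.count (i+1))).sum = s.countP (fun x => x ≤ v) := by
  intro v
  induction v with
  | zero =>
    rw [show List.range 0 = [] from rfl]
    symm
    rw [List.map_nil, List.sum_nil, List.countP_eq_zero]
    intro a ha
    have := h1 a ha
    simp
    omega
  | succ v ih =>
    rw [List.range_succ, List.map_append, List.sum_append, ih, countP_le_succ]
    simp

lemma mem_bounds_of_Ps {n k : ℕ} {s : List ℕ} (hs : Ps n k s) : ∀ x ∈ s, 1 ≤ x ∧ x ≤ n := by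
  intro x hx
  rw [List.mem_iff_getElem] at hx
  obtain ⟨i, hi, rfl⟩ := hx
  have := hs.2.2.1 i hi
  simp only [List.get_eq_getElem] at this
  omega

lemma toS_mem_Ps (n k : ℕ) (m : List ℕ) (hm : Pm n 0 k m) : Ps n k (toS 1 m) := by
  obtain ⟨h1, h2, h3, h4, h5⟩ := hm
  have hsum : m.sum = n := by omega
  have hlen : (toS 1 m).length = n := by rw [toS_length, hsum]
  have hsorted := toS_sorted 1 m
  have hcountP : ∀ v, (toS 1 m).countP (fun x => x ≤ v) ≤ v := by
    intro v
    rw [toS_countP_le]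
    simpa using h4 v
  refine ⟨hlen, hsorted, ?_, ?_, ?_⟩
  · intro i h
    refine ⟨(sorted_ge_iff _ hsorted).2 hcountP i h, ?_⟩
    have hmem : (toS 1 m).get ⟨i, h⟩ ∈ toS 1 m := List.get_mem _ _
    have := toS_mem 1 m _ hmem
    omega
  · intro v
    rw [toS_count]
    by_cases hv : 1 ≤ v ∧ v < 1 + m.length
    · rw [if_pos hv]
      have hlt : v - 1 < m.length := by omega
      rw [List.getD_eq_getElem _ _ hlt]
      exact h2 _ (List.getElem_mem hlt)
    · rw [if_neg hv]; omega
  · rw [cardfilter, ← h5, ← h1, ← countP_getD m]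
    apply List.countP_congr
    intro i hi
    rw [List.mem_range] at hi
    rw [toS_count, if_pos (by omega)]
    simp

lemma toM_Pm (n k : ℕ) (s : List ℕ) (hs : Ps n k s) :
    Pm n 0 k ((List.range n).map fun i => s.count (i+1)) := by
  obtain ⟨h1, h2, h3, h4, h5⟩ := hs
  have hb := mem_bounds_of_Ps ⟨h1, h2, h3, h4, h5⟩
  have hge1 : ∀ x ∈ s, 1 ≤ x := fun x hx => (hb x hx).1
  have hcountP := (sorted_ge_iff s h2).1 (fun i h => (h3 i h).1)
  refine ⟨by simp, ?_, ?_, ?_, ?_⟩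
  · intro x hx
    rw [List.mem_map] at hx
    obtain ⟨i, -, rfl⟩ := hx
    exact h4 (i+1)
  · rw [sum_counts s hge1 n, Nat.add_zero]
    rw [List.countP_eq_length.2 ?_, h1]
    intro a ha
    have := hb a ha
    simp
    omega
  · intro v
    by_cases hv : v ≤ n
    · rw [← List.map_take, List.take_range, show v ⊓ n = v from by omega]
      rw [sum_counts s hge1 v]
      exact hcountP v
    · rw [List.take_of_length_le (by simp; omega)]
      rw [sum_counts s hge1 n, ← h1]
      calc s.countP _ ≤ s.length := List.countP_le_length
      _ ≤ v := by omega
  · rw [show (2:ℕ) = 2 from rfl]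
    rw [List.count_eq_countP, List.countP_map, ← h5, cardfilter]
    apply List.countP_congr
    intro i hi
    simp [Function.comp]

lemma toS_toM (n k : ℕ) (s : List ℕ) (hs : Ps n k s) :
    toS 1 ((List.range n).map fun i => s.count (i+1)) = s := by
  obtain ⟨h1, h2, h3, h4, h5⟩ := hs
  have hb := mem_bounds_of_Ps ⟨h1, h2, h3, h4, h5⟩
  apply List.Perm.eq_of_pairwise' (toS_sorted _ _) h2
  rw [List.perm_iff_count]
  intro v
  rw [toS_count]
  simp only [List.length_map, List.length_range]
  by_cases hv : 1 ≤ v ∧ v < 1 + n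
  · rw [if_pos hv]
    have hlt : v - 1 < ((List.range n).map fun i => s.count (i+1)).length := by simp; omega
    rw [List.getD_eq_getElem _ _ hlt, List.getElem_map, List.getElem_range,
      show v - 1 + 1 = v from by omega]
  · rw [if_neg hv]
    symm
    rw [List.count_eq_zero]
    intro hvmem
    have := hb v hvmem
    omega

/-- the number of weakly increasing words `s₁ ≤ … ≤ s_n` with
`i ≤ sᵢ ≤ n` (1-indexed), in which no value occurs more than twice and exactly
`k` values occur twice, equals `binom(n, 2k) · C_k`. -/
theorem statement12 (n k : ℕ) :
    Nat.card {s : List ℕ // s.length = n ∧ s.Pairwise (· ≤ ·) ∧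
        (∀ i (h : i < s.length), i + 1 ≤ s.get ⟨i, h⟩ ∧ s.get ⟨i, h⟩ ≤ n) ∧
        (∀ v, s.count v ≤ 2) ∧
        ((Finset.Icc 1 n).filter fun v => s.count v = 2).card = k} =
      n.choose (2 * k) * catalan k := by
  have e1 : {s : List ℕ // s.length = n ∧ s.Pairwise (· ≤ ·) ∧
        (∀ i (h : i < s.length), i + 1 ≤ s.get ⟨i, h⟩ ∧ s.get ⟨i, h⟩ ≤ n) ∧
        (∀ v, s.count v ≤ 2) ∧
        ((Finset.Icc 1 n).filter fun v => s.count v = 2).card = k} ≃ {s : List ℕ // Ps n k s} :=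
    Equiv.subtypeEquivRight (fun s => Iff.rfl)
  rw [Nat.card_congr e1]
  have g : {m : List ℕ // Pm n 0 k m} → {s : List ℕ // Ps n k s} :=
    fun m => ⟨toS 1 m.1, toS_mem_Ps n k m.1 m.2⟩
  have hg : Function.Bijective (fun m : {m : List ℕ // Pm n 0 k m} =>
      (⟨toS 1 m.1, toS_mem_Ps n k m.1 m.2⟩ : {s : List ℕ // Ps n k s})) := by
    constructor
    · rintro ⟨m, hm⟩ ⟨m', hm'⟩ h
      simp only [Subtype.mk.injEq] at h ⊢
      apply List.ext_getElem (by rw [hm.1, hm'.1])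
      intro i hi1 hi2
      have c1 := toS_count 1 (i+1) m
      have c2 := toS_count 1 (i+1) m'
      rw [h] at c1
      rw [c2] at c1
      rw [if_pos (by constructor <;> omega), if_pos (by constructor <;> omega)] at c1
      rw [List.getD_eq_getElem _ _ (by simpa using hi2),
        List.getD_eq_getElem _ _ (by simpa using hi1)] at c1
      simpa using c1.symm
    · rintro ⟨s, hs⟩
      exact ⟨⟨(List.range n).map fun i => s.count (i+1), toM_Pm n k s hs⟩,
        Subtype.ext (toS_toM n k s hs)⟩
  rw [Nat.card_congr (Equiv.ofBijective _ hg).symm]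
  have := Am_eq n 0 k
  rw [Am] at this
  rw [this, show 2*k+0 = 2*k from by omega, catalan_eq_bal]
end
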